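/- arXiv:0903.3744 — 5 statements merged into one kernel-verified Lean document; each statement's English description precedes it below -/
import Mathlib

section
/- Every LS-gallery δ admits a unique partition 0 = i₁ < i₂ < ⋯ < i_t = p+1 of its index set such that each interval [i_k, i_{k+1}] is an α-directed section, a (−α)-directed section, or an α-stable section. -/
/-!
Abstract combinatorial model for the α-data of a combinatorial gallery
`δ = (Δ₀' ⊂ Δ₀ ⊃ Δ₁' ⊂ ⋯ ⊃ Δ_p' ⊂ Δ_p ⊃ Δ_{p+1}')` for a fixed simple root `α`:
`lev j = some m` iff the face `Δ_j'` is contained in the hyperplane `H_{α,m}`,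
and `lev j = none` iff `Δ_j'` lies in no α-hyperplane, for `j = 0, …, p+1`.
-/

/-- `(l,r)` is a witnessing pair for α-stability at level `m`. -/
def IsStablePair (lev : ℕ → Option ℤ) (m : ℤ) (l r : ℕ) : Prop :=
  lev l = some m ∧ lev r = some m ∧ ∀ s, l ≤ s → s < r → lev s ≠ some (m - 1)

/-- The alcove `Δ_i` is α-stable at level `m` (without minimality of `m`). -/
def StableAtLevel (lev : ℕ → Option ℤ) (p : ℕ) (m : ℤ) (i : ℕ) : Prop :=
  ∃ l r, l ≤ i ∧ i < r ∧ r ≤ p + 1 ∧ IsStablePair lev m l r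

/-- The alcove `Δ_i` is α-stable at `m`, with `m` minimal. -/
def StableAt (lev : ℕ → Option ℤ) (p : ℕ) (m : ℤ) (i : ℕ) : Prop :=
  StableAtLevel lev p m i ∧ ∀ m' < m, ¬ StableAtLevel lev p m' i

/-- `Δ_i` is α-stable (at some level). -/
def IsStable (lev : ℕ → Option ℤ) (p : ℕ) (i : ℕ) : Prop :=
  ∃ m, StableAtLevel lev p m i

/-- `[i,j]` is an α-directed section: for some `m`, all faces strictly between `i` and
`j` lie in no α-hyperplane (`H_{α,m}` only at `k = i`, `H_{α,m+1}` only at `k = j`)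
and no index in `[i, j−1]` is α-stable; the boundary faces lie in `H_{α,m}` resp.
`H_{α,m+1}`. -/
def DirectedPos (lev : ℕ → Option ℤ) (p : ℕ) (i j : ℕ) : Prop :=
  ∃ m : ℤ, lev i = some m ∧ lev j = some (m + 1) ∧
    ∀ k, i ≤ k → k < j →
      (lev k = some m → k = i) ∧ (lev k = some (m + 1) → k = j) ∧ ¬ IsStable lev p k

/-- `[i,j]` is a `(−α)`-directed section. -/
def DirectedNeg (lev : ℕ → Option ℤ) (p : ℕ) (i j : ℕ) : Prop :=
  ∃ m : ℤ, lev i = some m ∧ lev j = some (m - 1) ∧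
    ∀ k, i ≤ k → k < j →
      (lev k = some m → k = i) ∧ (lev k = some (m - 1) → k = j) ∧ ¬ IsStable lev p k

/-- `[i,j]` is an α-stable section at some level `m`: there is `k ∈ [i,j−1]` which is
α-stable at `m` with `l_α(Δ_k) = i` and `r_α(Δ_k) = j` (extremal witnesses). -/
def StableSection (lev : ℕ → Option ℤ) (p : ℕ) (i j : ℕ) : Prop :=
  ∃ m k, i ≤ k ∧ k < j ∧ StableAt lev p m k ∧ IsStablePair lev m i j ∧
    (∀ r', k < r' → (∃ l', l' ≤ k ∧ IsStablePair lev m l' r') → j ≤ r') ∧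
    (∀ l', l' ≤ k → (∃ r', k < r' ∧ r' ≤ p + 1 ∧ IsStablePair lev m l' r') → l' ≤ i)

namespace GP9

variable (lev : ℕ → Option ℤ) (p : ℕ)

/-- The relation "`[a,b]` is a section of one of the three kinds". -/
def Sect (a b : ℕ) : Prop :=
  DirectedPos lev p a b ∨ DirectedNeg lev p a b ∨ StableSection lev p a b

theorem defined_le (hjunk : ∀ j, p + 1 < j → lev j = none) {j : ℕ} {m : ℤ}
    (h : lev j = some m) : j ≤ p + 1 := by
  by_contra hc
  rw [hjunk j (by omega)] at h
  exact nomatch h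

/-- Discrete intermediate value theorem for the level walk: any value `c` strictly
between the value at `a` (exclusive) and the value at `b` (inclusive) is attained
at some index in `(a, b]`. -/
theorem ivt (hjunk : ∀ j, p + 1 < j → lev j = none)
    (hstep : ∀ j k m m', j < k → k ≤ p + 1 → lev j = some m → lev k = some m' →
      (∀ s, j < s → s < k → lev s = none) → m' = m + 1 ∨ m' = m - 1 ∨ m' = m) :
    ∀ d a b : ℕ, ∀ va vb c : ℤ, b - a ≤ d → a < b → lev a = some va → lev b = some vb →
      ((va < c ∧ c ≤ vb) ∨ (vb ≤ c ∧ c < va)) →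
      ∃ s, a < s ∧ s ≤ b ∧ lev s = some c := by
  intro d
  induction d with
  | zero => intro a b va vb c h1 h2 _ _ _; omega
  | succ d ih =>
    intro a b va vb c h1 h2 ha hb hc
    classical
    have hex : ∃ k, a < k ∧ (lev k).isSome := ⟨b, h2, by simp [hb]⟩
    obtain ⟨han, hsome⟩ := Nat.find_spec hex
    set n := Nat.find hex with hn
    have hnb : n ≤ b := Nat.find_min' hex ⟨h2, by simp [hb]⟩
    obtain ⟨v, hv⟩ := Option.isSome_iff_exists.mp hsome
    have hgap : ∀ s, a < s → s < n → lev s = none := by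
      intro s hs1 hs2
      have h := Nat.find_min hex hs2
      exact Option.not_isSome_iff_eq_none.mp (fun hs => h ⟨hs1, hs⟩)
    have hnp : n ≤ p + 1 := defined_le lev p hjunk hv
    have hstepv := hstep a n va v han hnp ha hv hgap
    have habs : va - 1 ≤ v ∧ v ≤ va + 1 := by rcases hstepv with h | h | h <;> omega
    by_cases hvc : v = c
    · exact ⟨n, han, hnb, hvc ▸ hv⟩
    · have hnb' : n < b := by
        rcases Nat.lt_or_ge n b with h | h
        · exact h
        · have hnb2 : n = b := le_antisymm hnb h
          rw [hnb2, hb] at hv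
          injection hv with hvv
          omega
      obtain ⟨s, hs1, hs2, hs3⟩ := ih n b v vb c (by omega) hnb' hv hb (by omega)
      exact ⟨s, lt_trans han hs1, hs2, hs3⟩

/-- If `i` is stable at level `μ` and `lev i = some m`, then `μ ≤ m`. -/
theorem stable_le (hjunk : ∀ j, p + 1 < j → lev j = none)
    (hstep : ∀ j k m m', j < k → k ≤ p + 1 → lev j = some m → lev k = some m' →
      (∀ s, j < s → s < k → lev s = none) → m' = m + 1 ∨ m' = m - 1 ∨ m' = m)
    {μ m : ℤ} {i : ℕ}
    (hst : StableAtLevel lev p μ i) (hi : lev i = some m) : μ ≤ m := by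
  obtain ⟨l, r, hli, hir, hr, hl, hr', hno⟩ := hst
  by_contra hc
  have hli' : l < i := by
    rcases Nat.lt_or_ge l i with h | h
    · exact h
    · have hli2 : l = i := by omega
      rw [hli2, hi] at hl
      injection hl with hh
      omega
  obtain ⟨s, hs1, hs2, hs3⟩ := ivt lev p hjunk hstep (i - l) l i μ m (μ - 1) le_rfl hli' hl hi
    (Or.inr ⟨by omega, by omega⟩)
  exact hno s (by omega) (by omega) hs3

/-- Stability transfers backwards across an undefined gap. -/
theorem stable_transfer {i j k : ℕ} {μ : ℤ} (hgap : ∀ s, i < s → s < j → lev s = none)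
    (hik : i ≤ k) (hkj : k < j) (hst : StableAtLevel lev p μ k) :
    StableAtLevel lev p μ i := by
  obtain ⟨l, r, hlk, hkr, hr, hpl, hpr, hno⟩ := hst
  have hli : l ≤ i := by
    by_contra hc
    have hnone := hgap l (by omega) (by omega)
    rw [hnone] at hpl
    exact nomatch hpl
  exact ⟨l, r, hli, by omega, hr, hpl, hpr, hno⟩

/-- In an α-directed section no index strictly between the endpoints is defined. -/
theorem dirpos_gap (hjunk : ∀ j, p + 1 < j → lev j = none)
    (hstep : ∀ j k m m', j < k → k ≤ p + 1 → lev j = some m → lev k = some m' →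
      (∀ s, j < s → s < k → lev s = none) → m' = m + 1 ∨ m' = m - 1 ∨ m' = m)
    {i j : ℕ} (hij : i < j) (h : DirectedPos lev p i j) :
    ∀ k, i < k → k < j → lev k = none := by
  obtain ⟨m, hi, hj, hcond⟩ := h
  by_contra hc
  push_neg at hc
  obtain ⟨k0, hk1, hk2, hk3⟩ := hc
  classical
  have hex : ∃ k, i < k ∧ (lev k).isSome := ⟨k0, hk1, Option.isSome_iff_ne_none.mpr hk3⟩
  obtain ⟨hin, hsome⟩ := Nat.find_spec hex
  set n := Nat.find hex with hn
  have hnk : n ≤ k0 := Nat.find_min' hex ⟨hk1, Option.isSome_iff_ne_none.mpr hk3⟩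
  obtain ⟨v, hv⟩ := Option.isSome_iff_exists.mp hsome
  have hgap : ∀ s, i < s → s < n → lev s = none := by
    intro s hs1 hs2
    have h := Nat.find_min hex hs2
    exact Option.not_isSome_iff_eq_none.mp (fun hs => h ⟨hs1, hs⟩)
  have hnp : n ≤ p + 1 := defined_le lev p hjunk hv
  have hsv := hstep i n m v hin hnp hi hv hgap
  have hnj : n < j := lt_of_le_of_lt hnk hk2
  have hvm : v ≠ m := by
    intro h
    have := (hcond n (by omega) hnj).1 (h ▸ hv)
    omega
  have hvm1 : v ≠ m + 1 := by
    intro h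
    have := (hcond n (by omega) hnj).2.1 (h ▸ hv)
    omega
  have hv' : v = m - 1 := by rcases hsv with h | h | h <;> omega
  obtain ⟨s, hs1, hs2, hs3⟩ := ivt lev p hjunk hstep (j - n) n j v (m + 1) m le_rfl hnj hv hj
    (Or.inl ⟨by omega, by omega⟩)
  have hsj : s < j := by
    rcases Nat.lt_or_ge s j with h | h
    · exact h
    · have hsj2 : s = j := by omega
      rw [hsj2, hj] at hs3
      injection hs3 with hh
      omega
  have := (hcond s (by omega) hsj).1 hs3
  omega

/-- In a `(−α)`-directed section no index strictly between the endpoints is defined. -/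
theorem dirneg_gap (hjunk : ∀ j, p + 1 < j → lev j = none)
    (hstep : ∀ j k m m', j < k → k ≤ p + 1 → lev j = some m → lev k = some m' →
      (∀ s, j < s → s < k → lev s = none) → m' = m + 1 ∨ m' = m - 1 ∨ m' = m)
    {i j : ℕ} (hij : i < j) (h : DirectedNeg lev p i j) :
    ∀ k, i < k → k < j → lev k = none := by
  obtain ⟨m, hi, hj, hcond⟩ := h
  by_contra hc
  push_neg at hc
  obtain ⟨k0, hk1, hk2, hk3⟩ := hc
  classical
  have hex : ∃ k, i < k ∧ (lev k).isSome := ⟨k0, hk1, Option.isSome_iff_ne_none.mpr hk3⟩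
  obtain ⟨hin, hsome⟩ := Nat.find_spec hex
  set n := Nat.find hex with hn
  have hnk : n ≤ k0 := Nat.find_min' hex ⟨hk1, Option.isSome_iff_ne_none.mpr hk3⟩
  obtain ⟨v, hv⟩ := Option.isSome_iff_exists.mp hsome
  have hgap : ∀ s, i < s → s < n → lev s = none := by
    intro s hs1 hs2
    have h := Nat.find_min hex hs2
    exact Option.not_isSome_iff_eq_none.mp (fun hs => h ⟨hs1, hs⟩)
  have hnp : n ≤ p + 1 := defined_le lev p hjunk hv
  have hsv := hstep i n m v hin hnp hi hv hgap
  have hnj : n < j := lt_of_le_of_lt hnk hk2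
  have hvm : v ≠ m := by
    intro h
    have := (hcond n (by omega) hnj).1 (h ▸ hv)
    omega
  have hvm1 : v ≠ m - 1 := by
    intro h
    have := (hcond n (by omega) hnj).2.1 (h ▸ hv)
    omega
  have hv' : v = m + 1 := by rcases hsv with h | h | h <;> omega
  obtain ⟨s, hs1, hs2, hs3⟩ := ivt lev p hjunk hstep (j - n) n j v (m - 1) m le_rfl hnj hv hj
    (Or.inr ⟨by omega, by omega⟩)
  have hsj : s < j := by
    rcases Nat.lt_or_ge s j with h | h
    · exact h
    · have hsj2 : s = j := by omega
      rw [hsj2, hj] at hs3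
      injection hs3 with hh
      omega
  have := (hcond s (by omega) hsj).1 hs3
  omega

/-- A stable section starting at `i` makes `i` stable. -/
theorem stableSection_isStable (hjunk : ∀ j, p + 1 < j → lev j = none) {i j : ℕ}
    (hij : i < j) (h : StableSection lev p i j) : IsStable lev p i := by
  obtain ⟨m, k, hik, hkj, _, hpair, _, _⟩ := h
  exact ⟨m, i, j, le_rfl, hij, defined_le lev p hjunk hpair.2.1, hpair⟩

/-- Key half of uniqueness for stable sections. -/
theorem stableSection_le (hjunk : ∀ j, p + 1 < j → lev j = none) {i j j' k' : ℕ} {m : ℤ}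
    (hij : i < j)
    (hpair : IsStablePair lev m i j)
    (hk' : i ≤ k') (hkj' : k' < j')
    (hpair' : IsStablePair lev m i j')
    (hjmin' : ∀ r', k' < r' → (∃ l', l' ≤ k' ∧ IsStablePair lev m l' r') → j' ≤ r')
    (himax' : ∀ l', l' ≤ k' → (∃ r', k' < r' ∧ r' ≤ p + 1 ∧ IsStablePair lev m l' r') → l' ≤ i) :
    j' ≤ j := by
  have hkj : k' < j := by
    by_contra hcon
    push_neg at hcon
    have hjj' : IsStablePair lev m j j' :=
      ⟨hpair.2.1, hpair'.2.1, fun s h1 h2 => hpair'.2.2 s (by omega) h2⟩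
    have := himax' j hcon ⟨j', hkj', defined_le lev p hjunk hpair'.2.1, hjj'⟩
    omega
  exact hjmin' j hkj ⟨i, hk', hpair⟩

/-- The next section endpoint is unique. -/
theorem sect_unique (hjunk : ∀ j, p + 1 < j → lev j = none)
    (hstep : ∀ j k m m', j < k → k ≤ p + 1 → lev j = some m → lev k = some m' →
      (∀ s, j < s → s < k → lev s = none) → m' = m + 1 ∨ m' = m - 1 ∨ m' = m)
    {i j j' : ℕ} (hij : i < j) (hij' : i < j')
    (h1 : Sect lev p i j) (h2 : Sect lev p i j') : j = j' := by
  have defnext : ∀ {a b : ℕ}, (∀ k, i < k → k < a → lev k = none) →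
      (∀ k, i < k → k < b → lev k = none) →
      (lev a).isSome → (lev b).isSome → i < a → i < b → a = b := by
    intro a b g g' hja hjb h1 h2
    rcases lt_trichotomy a b with h | h | h
    · rw [g' a h1 h] at hja; exact absurd hja (by simp)
    · exact h
    · rw [g b h2 h] at hjb; exact absurd hjb (by simp)
  rcases h1 with hp | hn | hs <;> rcases h2 with hp' | hn' | hs'
  · exact defnext (dirpos_gap lev p hjunk hstep hij hp) (dirpos_gap lev p hjunk hstep hij' hp')
      (by rw [hp.choose_spec.2.1]; rfl) (by rw [hp'.choose_spec.2.1]; rfl) hij hij'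
  · have hjj : j = j' := defnext (dirpos_gap lev p hjunk hstep hij hp)
      (dirneg_gap lev p hjunk hstep hij' hn')
      (by rw [hp.choose_spec.2.1]; rfl) (by rw [hn'.choose_spec.2.1]; rfl) hij hij'
    exfalso
    obtain ⟨m, ha, hb, _⟩ := hp
    obtain ⟨m', ha', hb', _⟩ := hn'
    rw [ha] at ha'
    injection ha' with hm
    rw [← hjj, hb] at hb'
    injection hb' with hm2
    omega
  · exfalso
    obtain ⟨m, _, _, hcond⟩ := hp
    exact (hcond i le_rfl hij).2.2 (stableSection_isStable lev p hjunk hij' hs')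
  · have hjj : j = j' := defnext (dirneg_gap lev p hjunk hstep hij hn)
      (dirpos_gap lev p hjunk hstep hij' hp')
      (by rw [hn.choose_spec.2.1]; rfl) (by rw [hp'.choose_spec.2.1]; rfl) hij hij'
    exfalso
    obtain ⟨m, ha, hb, _⟩ := hn
    obtain ⟨m', ha', hb', _⟩ := hp'
    rw [ha] at ha'
    injection ha' with hm
    rw [← hjj, hb] at hb'
    injection hb' with hm2
    omega
  · exact defnext (dirneg_gap lev p hjunk hstep hij hn) (dirneg_gap lev p hjunk hstep hij' hn')
      (by rw [hn.choose_spec.2.1]; rfl) (by rw [hn'.choose_spec.2.1]; rfl) hij hij'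
  · exfalso
    obtain ⟨m, _, _, hcond⟩ := hn
    exact (hcond i le_rfl hij).2.2 (stableSection_isStable lev p hjunk hij' hs')
  · exfalso
    obtain ⟨m, _, _, hcond⟩ := hp'
    exact (hcond i le_rfl hij').2.2 (stableSection_isStable lev p hjunk hij hs)
  · exfalso
    obtain ⟨m, _, _, hcond⟩ := hn'
    exact (hcond i le_rfl hij').2.2 (stableSection_isStable lev p hjunk hij hs)
  · obtain ⟨m, k, hik, hkj, _, hpair, hjmin, himax⟩ := hs
    obtain ⟨m', k', hik', hkj', _, hpair', hjmin', himax'⟩ := hs'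
    have hm : m = m' := by
      have h2 := hpair'.1
      rw [hpair.1] at h2
      exact Option.some.inj h2
    subst hm
    exact le_antisymm
      (stableSection_le lev p hjunk hij' hpair' hik hkj hpair hjmin himax)
      (stableSection_le lev p hjunk hij hpair hik' hkj' hpair' hjmin' himax')

/-- Sections end at a defined index. -/
theorem sect_defined {i j : ℕ} (h : Sect lev p i j) : ∃ v, lev j = some v := by
  rcases h with hp | hn | hs
  · exact ⟨_, hp.choose_spec.2.1⟩
  · exact ⟨_, hn.choose_spec.2.1⟩
  · exact ⟨_, hs.choose_spec.choose_spec.2.2.2.1.2.1⟩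

/-- The main step lemma: from any good start `i < p + 1` there is a section
`[i, j]` with a good endpoint `j`. -/
theorem step (hjunk : ∀ j, p + 1 < j → lev j = none)
    (hend : ∃ mw : ℤ, lev (p + 1) = some mw)
    (hstep : ∀ j k m m', j < k → k ≤ p + 1 → lev j = some m → lev k = some m' →
      (∀ s, j < s → s < k → lev s = none) → m' = m + 1 ∨ m' = m - 1 ∨ m' = m)
    {i : ℕ} {m : ℤ} (hlev : lev i = some m)
    (hInv : ∀ μ, StableAtLevel lev p μ i → m ≤ μ) (hip : i < p + 1) :
    ∃ j m', i < j ∧ j ≤ p + 1 ∧ Sect lev p i j ∧ lev j = some m' ∧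
      ∀ μ, StableAtLevel lev p μ j → m' ≤ μ := by
  classical
  by_cases hs : IsStable lev p i
  · -- stable case
    have hstAtm : StableAtLevel lev p m i := by
      obtain ⟨μ, hμ⟩ := hs
      have h1 : μ ≤ m := stable_le lev p hjunk hstep hμ hlev
      have h2 : m ≤ μ := hInv μ hμ
      have : μ = m := le_antisymm h1 h2
      exact this ▸ hμ
    obtain ⟨l₀, r₀, hl₀, hir₀, hr₀p, hpair₀⟩ := id hstAtm
    have hT : ∃ r, i < r ∧ ∃ l, l ≤ i ∧ IsStablePair lev m l r := ⟨r₀, hir₀, l₀, hl₀, hpair₀⟩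
    obtain ⟨hij, l₁, hl₁, hpair₁⟩ := Nat.find_spec hT
    set j := Nat.find hT with hj
    have hjmin : ∀ r', i < r' → (∃ l', l' ≤ i ∧ IsStablePair lev m l' r') → j ≤ r' :=
      fun r' h1 h2 => Nat.find_min' hT ⟨h1, h2⟩
    have hjdef : lev j = some m := hpair₁.2.1
    have hjp : j ≤ p + 1 := defined_le lev p hjunk hjdef
    have hpairIJ : IsStablePair lev m i j :=
      ⟨hlev, hjdef, fun s h1 h2 => hpair₁.2.2 s (by omega) h2⟩
    have hstSec : StableSection lev p i j := by
      refine ⟨m, i, le_rfl, hij, ⟨hstAtm, fun m' hm' hst' => absurd (hInv m' hst') (by omega)⟩,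
        hpairIJ, hjmin, fun l' hl' _ => hl'⟩
    refine ⟨j, m, hij, hjp, Or.inr (Or.inr hstSec), hjdef, ?_⟩
    rintro μ ⟨l, r, hlj, hjr, hrp, hpl, hpr, hno⟩
    rcases Nat.lt_or_ge l j with hlj2 | hlj2
    · rcases Nat.lt_or_ge i l with hli | hli
      swap
      · exact hInv μ ⟨l, r, hli, by omega, hrp, hpl, hpr, hno⟩
      · by_contra hc
        push_neg at hc
        obtain ⟨s, hs1, hs2, hs3⟩ := ivt lev p hjunk hstep (l - i) i l m μ (m - 1) le_rfl hli
          hlev hpl (Or.inr ⟨by omega, by omega⟩)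
        exact hpairIJ.2.2 s (by omega) (by omega) hs3
    · have hlj3 : l = j := by omega
      rw [hlj3, hjdef] at hpl
      injection hpl with hh
      omega
  · -- non-stable case: directed section to the next defined index
    have hex : ∃ k, i < k ∧ (lev k).isSome := by
      obtain ⟨mw, hmw⟩ := hend
      exact ⟨p + 1, hip, by simp [hmw]⟩
    obtain ⟨hij, hsome⟩ := Nat.find_spec hex
    set j := Nat.find hex with hj
    obtain ⟨m', hm'⟩ := Option.isSome_iff_exists.mp hsome
    have hgap : ∀ s, i < s → s < j → lev s = none := by
      intro s hs1 hs2
      have h := Nat.find_min hex hs2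
      exact Option.not_isSome_iff_eq_none.mp (fun hss => h ⟨hs1, hss⟩)
    have hjp : j ≤ p + 1 := defined_le lev p hjunk hm'
    have hsv := hstep i j m m' hij hjp hlev hm' hgap
    have hmm : m' ≠ m := by
      intro h
      apply hs
      refine ⟨m, i, j, le_rfl, hij, hjp, hlev, h ▸ hm', fun s h1 h2 hcon => ?_⟩
      rcases Nat.lt_or_ge i s with h3 | h3
      · rw [hgap s h3 h2] at hcon
        exact nomatch hcon
      · have hsi : s = i := by omega
        rw [hsi, hlev] at hcon
        injection hcon with hh
        omega
    have hInvj : ∀ μ, StableAtLevel lev p μ j → m' ≤ μ := by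
      rintro μ ⟨l, r, hlj, hjr, hrp, hpl, hpr, hno⟩
      rcases Nat.lt_or_ge l j with hlj2 | hlj2
      · exfalso
        have hli : l ≤ i := by
          by_contra hc
          rw [hgap l (by omega) hlj2] at hpl
          exact nomatch hpl
        exact hs ⟨μ, l, r, hli, by omega, hrp, hpl, hpr, hno⟩
      · have hlj3 : l = j := by omega
        rw [hlj3, hm'] at hpl
        injection hpl with hh
        omega
    have hcond : ∀ k, i ≤ k → k < j →
        (lev k = some m → k = i) ∧ ¬ IsStable lev p k := by
      intro k hk1 hk2
      constructor
      · intro hkm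
        by_contra hcon
        rw [hgap k (by omega) hk2] at hkm
        exact nomatch hkm
      · rintro ⟨μ, hμ⟩
        exact hs ⟨μ, stable_transfer lev p hgap hk1 hk2 hμ⟩
    rcases hsv with h | h | h
    · refine ⟨j, m', hij, hjp, Or.inl ⟨m, hlev, h ▸ hm', fun k hk1 hk2 => ?_⟩, hm', hInvj⟩
      refine ⟨(hcond k hk1 hk2).1, fun hkm => ?_, (hcond k hk1 hk2).2⟩
      exfalso
      rcases Nat.lt_or_ge i k with h3 | h3
      · rw [hgap k h3 hk2] at hkm
        exact nomatch hkm
      · have hki : k = i := by omega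
        rw [hki, hlev] at hkm
        injection hkm with hh
        omega
    · refine ⟨j, m', hij, hjp, Or.inr (Or.inl ⟨m, hlev, h ▸ hm', fun k hk1 hk2 => ?_⟩),
        hm', hInvj⟩
      refine ⟨(hcond k hk1 hk2).1, fun hkm => ?_, (hcond k hk1 hk2).2⟩
      exfalso
      rcases Nat.lt_or_ge i k with h3 | h3
      · rw [hgap k h3 hk2] at hkm
        exact nomatch hkm
      · have hki : k = i := by omega
        rw [hki, hlev] at hkm
        injection hkm with hh
        omega
    · exact absurd h hmm

/-- Existence of the partition from any good start. -/
theorem build (hjunk : ∀ j, p + 1 < j → lev j = none)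
    (hend : ∃ mw : ℤ, lev (p + 1) = some mw)
    (hstep : ∀ j k m m', j < k → k ≤ p + 1 → lev j = some m → lev k = some m' →
      (∀ s, j < s → s < k → lev s = none) → m' = m + 1 ∨ m' = m - 1 ∨ m' = m) :
    ∀ d i, ∀ m : ℤ, p + 1 - i ≤ d → lev i = some m →
      (∀ μ, StableAtLevel lev p μ i → m ≤ μ) →
      ∃ L : List ℕ, L.Chain' (· < ·) ∧ L.head? = some i ∧ L.getLast? = some (p + 1) ∧
        L.Chain' (Sect lev p) := by
  intro d
  induction d with
  | zero =>
    intro i m h1 h2 h3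
    have hip : i ≤ p + 1 := defined_le lev p hjunk h2
    have hi : i = p + 1 := by omega
    subst hi
    exact ⟨[p + 1], List.isChain_singleton _, rfl, by simp, List.isChain_singleton _⟩
  | succ d ih =>
    intro i m h1 h2 h3
    have hip : i ≤ p + 1 := defined_le lev p hjunk h2
    rcases Nat.lt_or_ge i (p + 1) with hlt | hge
    · obtain ⟨j, m', hij, hjp, hsect, hjdef, hInvj⟩ := step lev p hjunk hend hstep h2 h3 hlt
      obtain ⟨L, hc, hh, hl, hsc⟩ := ih j m' (by omega) hjdef hInvj
      cases L with
      | nil => exact absurd hh (by simp)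
      | cons a t =>
        have ha : a = j := by
          simp only [List.head?_cons, Option.some.injEq] at hh
          exact hh
        subst ha
        exact ⟨i :: a :: t, List.isChain_cons_cons.mpr ⟨hij, hc⟩, rfl,
          by rwa [List.getLast?_cons_cons], List.isChain_cons_cons.mpr ⟨hsect, hsc⟩⟩
    · have hi : i = p + 1 := by omega
      subst hi
      exact ⟨[p + 1], List.isChain_singleton _, rfl, by simp, List.isChain_singleton _⟩

/-- Uniqueness of the partition. -/
theorem uniq (hjunk : ∀ j, p + 1 < j → lev j = none)
    (hstep : ∀ j k m m', j < k → k ≤ p + 1 → lev j = some m → lev k = some m' →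
      (∀ s, j < s → s < k → lev s = none) → m' = m + 1 ∨ m' = m - 1 ∨ m' = m) :
    ∀ L1 L2 : List ℕ, L1.Chain' (· < ·) → L2.Chain' (· < ·) → L1.head? = L2.head? →
      L1.getLast? = some (p + 1) → L2.getLast? = some (p + 1) →
      L1.Chain' (Sect lev p) → L2.Chain' (Sect lev p) → L1 = L2 := by
  intro L1
  induction L1 with
  | nil =>
    intro L2 _ _ _ hl1 _ _ _
    exact absurd hl1 (by simp)
  | cons a t ih =>
    intro L2 h1c h2c hh hl1 hl2 hs1 hs2
    cases L2 with
    | nil => exact absurd hh.symm (by simp)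
    | cons a' t' =>
      have haa : a = a' := by
        simp only [List.head?_cons, Option.some.injEq] at hh
        exact hh
      subst haa
      cases t with
      | nil =>
        have hap : a = p + 1 := by
          simp only [List.getLast?_singleton, Option.some.injEq] at hl1
          exact hl1
        cases t' with
        | nil => rfl
        | cons b' t'' =>
          exfalso
          have hsab : Sect lev p a b' := (List.isChain_cons_cons.mp hs2).1
          have hab : a < b' := (List.isChain_cons_cons.mp h2c).1
          obtain ⟨v, hv⟩ := sect_defined lev p hsab
          rw [hjunk b' (by omega)] at hv
          exact nomatch hv
      | cons b t2 =>
        cases t' with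
        | nil =>
          exfalso
          have hap : a = p + 1 := by
            simp only [List.getLast?_singleton, Option.some.injEq] at hl2
            exact hl2
          have hsab : Sect lev p a b := (List.isChain_cons_cons.mp hs1).1
          have hab : a < b := (List.isChain_cons_cons.mp h1c).1
          obtain ⟨v, hv⟩ := sect_defined lev p hsab
          rw [hjunk b (by omega)] at hv
          exact nomatch hv
        | cons b' t'' =>
          have hbb : b = b' := sect_unique lev p hjunk hstep
            (List.isChain_cons_cons.mp h1c).1 (List.isChain_cons_cons.mp h2c).1
            (List.isChain_cons_cons.mp hs1).1 (List.isChain_cons_cons.mp hs2).1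
          subst hbb
          have := ih (b :: t'') (List.isChain_cons_cons.mp h1c).2 (List.isChain_cons_cons.mp h2c).2
            rfl (by rwa [List.getLast?_cons_cons] at hl1)
            (by rwa [List.getLast?_cons_cons] at hl2)
            (List.isChain_cons_cons.mp hs1).2 (List.isChain_cons_cons.mp hs2).2
          rw [this]

end GP9

/-- Every LS-gallery admits a unique partition
`0 = i₁ < i₂ < ⋯ < i_t = p+1` of its index set such that each interval
`[i_k, i_{k+1}]` is an α-directed section, a `(−α)`-directed section, or an α-stable
section.  (The structural hypotheses encode that `lev` is the α-level data of a
combinatorial gallery starting at the origin.) -/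
theorem gallery_partition_exists_unique
    (lev : ℕ → Option ℤ) (p : ℕ)
    (hlev0 : lev 0 = some 0)
    (hend : ∃ mw : ℤ, lev (p + 1) = some mw)
    (hjunk : ∀ j, p + 1 < j → lev j = none)
    (hstep : ∀ j k m m', j < k → k ≤ p + 1 → lev j = some m → lev k = some m' →
      (∀ s, j < s → s < k → lev s = none) → m' = m + 1 ∨ m' = m - 1 ∨ m' = m) :
    ∃! L : List ℕ,
      L.Chain' (· < ·) ∧ L.head? = some 0 ∧ L.getLast? = some (p + 1) ∧
        L.Chain' (fun a b =>
          DirectedPos lev p a b ∨ DirectedNeg lev p a b ∨ StableSection lev p a b) := by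
  have hInv0 : ∀ μ, StableAtLevel lev p μ 0 → (0 : ℤ) ≤ μ := by
    rintro μ ⟨l, r, hl0, h0r, hrp, pl, pr, hno⟩
    have hl : l = 0 := by omega
    rw [hl, hlev0] at pl
    injection pl with hh
    omega
  obtain ⟨L, hc, hh, hl, hsect⟩ :=
    GP9.build lev p hjunk hend hstep (p + 1) 0 0 (by omega) hlev0 hInv0
  refine ⟨L, ⟨hc, hh, hl, hsect⟩, ?_⟩
  rintro L' ⟨hc', hh', hl', hs'⟩
  exact GP9.uniq lev p hjunk hstep L' L hc' hc (hh'.trans hh.symm) hl' hl hs' hsect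
end

section
/- In the partition of an LS-gallery into α-directed, (−α)-directed and α-stable sections, every α-directed section occurs after every (−α)-directed section; equivalently, there is no configuration where an α-directed section is followed (possibly after stable sections) by a (−α)-directed section. -/

private lemma chain'_zip_tail {α : Type*} {R : α → α → Prop} :
    ∀ {L : List α}, L.Chain' R → ∀ {a b : α}, (a, b) ∈ L.zip L.tail → R a b := by
  intro L
  induction L with
  | nil => intro _ a b h; simp at h
  | cons x xs ih =>
    intro hc a b h
    cases xs with
    | nil => simp at h
    | cons y ys =>
      simp only [List.Chain', List.isChain_cons_cons] at hc
      simp only [List.tail_cons, List.zip_cons_cons, List.mem_cons] at h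
      rcases h with h | h
      · rw [Prod.mk.injEq] at h; obtain ⟨rfl, rfl⟩ := h; exact hc.1
      · exact ih hc.2 h

private lemma fst_mem_zip_tail {α : Type*} :
    ∀ {L : List α} {a b : α}, (a, b) ∈ L.zip L.tail → a ∈ L := by
  intro L
  induction L with
  | nil => intro a b h; simp at h
  | cons x xs ih =>
    intro a b h
    cases xs with
    | nil => simp at h
    | cons y ys =>
      simp only [List.tail_cons, List.zip_cons_cons, List.mem_cons] at h ⊢
      rcases h with h | h
      · rw [Prod.mk.injEq] at h; exact Or.inl h.1
      · exact Or.inr (List.mem_cons.mp (ih h) |>.elim (fun h => h ▸ Or.inl rfl) Or.inr)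

private lemma zip_tail_pos :
    ∀ {L : List ℕ}, L.Chain' (· < ·) → ∀ {a b c d : ℕ},
      (a, b) ∈ L.zip L.tail → (c, d) ∈ L.zip L.tail →
      (a = c ∧ b = d) ∨ b ≤ c ∨ d ≤ a := by
  intro L
  induction L with
  | nil => intro _ a b c d h; simp at h
  | cons x xs ih =>
    intro hc a b c d h1 h2
    cases xs with
    | nil => simp at h1
    | cons y ys =>
      simp only [List.Chain', List.isChain_cons_cons] at hc
      have hyc : ∀ {c : ℕ}, c ∈ y :: ys → y ≤ c := by
        intro c hcm
        rcases List.mem_cons.mp hcm with rfl | hcm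
        · exact le_rfl
        · exact le_of_lt (List.rel_of_pairwise_cons
            (List.isChain_iff_pairwise.mp hc.2) hcm)
      simp only [List.tail_cons, List.zip_cons_cons, List.mem_cons] at h1 h2
      rcases h1 with h1 | h1 <;> rcases h2 with h2 | h2
      · rw [Prod.mk.injEq] at h1 h2
        exact Or.inl ⟨h1.1.trans h2.1.symm, h1.2.trans h2.2.symm⟩
      · rw [Prod.mk.injEq] at h1
        obtain ⟨rfl, rfl⟩ := h1
        exact Or.inr (Or.inl (hyc (fst_mem_zip_tail h2)))
      · rw [Prod.mk.injEq] at h2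
        obtain ⟨rfl, rfl⟩ := h2
        exact Or.inr (Or.inr (hyc (fst_mem_zip_tail h1)))
      · exact ih hc.2 h1 h2


private lemma lev_le (lev : ℕ → Option ℤ) (p : ℕ)
    (hjunk : ∀ j, p + 1 < j → lev j = none) {t : ℕ} {m : ℤ} (h : lev t = some m) :
    t ≤ p + 1 := by
  by_contra hc
  rw [hjunk t (not_le.mp hc)] at h
  cases h

private lemma ivt_up (lev : ℕ → Option ℤ) (p : ℕ)
    (hjunk : ∀ j, p + 1 < j → lev j = none)
    (hstep : ∀ j k m m', j < k → k ≤ p + 1 → lev j = some m → lev k = some m' →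
      (∀ s, j < s → s < k → lev s = none) → m' = m + 1 ∨ m' = m - 1 ∨ m' = m) :
    ∀ n a b A B C, b - a ≤ n → a < b → lev a = some A → lev b = some B →
      A ≤ C → C ≤ B → ∃ t, a ≤ t ∧ t ≤ b ∧ lev t = some C := by
  intro n
  induction n with
  | zero => intro a b A B C hn hab _ _ _ _; omega
  | succ n ih =>
    intro a b A B C hn hab ha hb hAC hCB
    rcases eq_or_lt_of_le hAC with rfl | hAC'
    · exact ⟨a, le_rfl, le_of_lt hab, ha⟩
    classical
    have hex : ∃ t, a < t ∧ (lev t).isSome := ⟨b, hab, by rw [hb]; rfl⟩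
    obtain ⟨haa', hsome⟩ := Nat.find_spec hex
    have ha'b : Nat.find hex ≤ b := Nat.find_min' hex ⟨hab, by rw [hb]; rfl⟩
    obtain ⟨A', hA'⟩ := Option.isSome_iff_exists.mp hsome
    have hnone : ∀ s, a < s → s < Nat.find hex → lev s = none := by
      intro s hs1 hs2
      have hmin := Nat.find_min hex hs2
      simp only [not_and] at hmin
      cases hh : lev s with
      | none => rfl
      | some z => exact absurd (by rw [hh]; rfl) (hmin hs1)
    have hstepres := hstep a (Nat.find hex) A A' haa' (lev_le lev p hjunk hA') ha hA' hnone
    rcases eq_or_lt_of_le ha'b with heq | ha'b'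
    · rw [heq, hb] at hA'
      injection hA' with hBA'
      refine ⟨b, le_of_lt hab, le_rfl, ?_⟩
      have : B = C := by omega
      rw [← this]; exact hb
    · have hA'C : A' ≤ C := by omega
      obtain ⟨t, ht1, ht2, ht3⟩ := ih (Nat.find hex) b A' B C (by omega) ha'b' hA' hb hA'C hCB
      exact ⟨t, le_trans (le_of_lt haa') ht1, ht2, ht3⟩

private lemma ivt_down (lev : ℕ → Option ℤ) (p : ℕ)
    (hjunk : ∀ j, p + 1 < j → lev j = none)
    (hstep : ∀ j k m m', j < k → k ≤ p + 1 → lev j = some m → lev k = some m' →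
      (∀ s, j < s → s < k → lev s = none) → m' = m + 1 ∨ m' = m - 1 ∨ m' = m) :
    ∀ n a b A B C, b - a ≤ n → a < b → lev a = some A → lev b = some B →
      B ≤ C → C ≤ A → ∃ t, a ≤ t ∧ t ≤ b ∧ lev t = some C := by
  intro n
  induction n with
  | zero => intro a b A B C hn hab _ _ _ _; omega
  | succ n ih =>
    intro a b A B C hn hab ha hb hBC hCA
    rcases eq_or_lt_of_le hCA with rfl | hCA'
    · exact ⟨a, le_rfl, le_of_lt hab, ha⟩
    classical
    have hex : ∃ t, a < t ∧ (lev t).isSome := ⟨b, hab, by rw [hb]; rfl⟩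
    obtain ⟨haa', hsome⟩ := Nat.find_spec hex
    have ha'b : Nat.find hex ≤ b := Nat.find_min' hex ⟨hab, by rw [hb]; rfl⟩
    obtain ⟨A', hA'⟩ := Option.isSome_iff_exists.mp hsome
    have hnone : ∀ s, a < s → s < Nat.find hex → lev s = none := by
      intro s hs1 hs2
      have hmin := Nat.find_min hex hs2
      simp only [not_and] at hmin
      cases hh : lev s with
      | none => rfl
      | some z => exact absurd (by rw [hh]; rfl) (hmin hs1)
    have hstepres := hstep a (Nat.find hex) A A' haa' (lev_le lev p hjunk hA') ha hA' hnone
    rcases eq_or_lt_of_le ha'b with heq | ha'b'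
    · rw [heq, hb] at hA'
      injection hA' with hBA'
      refine ⟨b, le_of_lt hab, le_rfl, ?_⟩
      have : B = C := by omega
      rw [← this]; exact hb
    · have hCA' : C ≤ A' := by omega
      obtain ⟨t, ht1, ht2, ht3⟩ := ih (Nat.find hex) b A' B C (by omega) ha'b' hA' hb hBC hCA'
      exact ⟨t, le_trans (le_of_lt haa') ht1, ht2, ht3⟩

/-- In the partition of an LS-gallery into α-directed, `(−α)`-directed and
α-stable sections, every α-directed section occurs after every `(−α)`-directed section:
if `[i,j]` is an α-directed section of the partition and `[k,l]` is a `(−α)`-directed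
section of the partition, then `k < i`. -/
theorem directed_sections_ordered
    (lev : ℕ → Option ℤ) (p : ℕ)
    (hlev0 : lev 0 = some 0)
    (hend : ∃ mw : ℤ, lev (p + 1) = some mw)
    (hjunk : ∀ j, p + 1 < j → lev j = none)
    (hstep : ∀ j k m m', j < k → k ≤ p + 1 → lev j = some m → lev k = some m' →
      (∀ s, j < s → s < k → lev s = none) → m' = m + 1 ∨ m' = m - 1 ∨ m' = m)
    (L : List ℕ)
    (hchain : L.Chain' (· < ·)) (hhead : L.head? = some 0)
    (hlast : L.getLast? = some (p + 1))
    (hsec : L.Chain' (fun a b =>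
      DirectedPos lev p a b ∨ DirectedNeg lev p a b ∨ StableSection lev p a b))
    (i j k l : ℕ)
    (hij : (i, j) ∈ L.zip L.tail) (hkl : (k, l) ∈ L.zip L.tail)
    (hpos : DirectedPos lev p i j) (hneg : DirectedNeg lev p k l) :
    k < i := by
  classical
  by_contra hik
  push_neg at hik
  obtain ⟨m, hi, hj, hposint⟩ := hpos
  obtain ⟨m', hk, hl, hnegint⟩ := hneg
  have hij' : i < j := chain'_zip_tail hchain hij
  have hkl' : k < l := chain'_zip_tail hchain hkl
  rcases zip_tail_pos hchain hij hkl with ⟨rfl, rfl⟩ | hjk | hli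
  · -- identical sections: contradiction on levels
    rw [hi] at hk; injection hk with h1
    rw [hj] at hl; injection hl with h2
    omega
  · -- j ≤ k
    rcases le_or_gt m' m with hmm | hmm
    · -- Case A: m' ≤ m, the index i is α-stable, contradicting hpos
      have hjl : j < l := lt_of_le_of_lt hjk hkl'
      obtain ⟨t, htj, htl, hlevt⟩ := ivt_down lev p hjunk hstep (l - j) j l (m + 1)
        (m' - 1) m le_rfl hjl hj hl (by omega) (by omega)
      have htj' : j < t := by
        rcases eq_or_lt_of_le htj with rfl | h
        · rw [hj] at hlevt; injection hlevt with h'; omega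
        · exact h
      have hex : ∃ u, j < u ∧ lev u = some m := ⟨t, htj', hlevt⟩
      obtain ⟨ht01, ht02⟩ := Nat.find_spec hex
      have hstab : IsStable lev p i := by
        refine ⟨m, i, Nat.find hex, le_rfl, lt_trans hij' ht01,
          lev_le lev p hjunk ht02, hi, ht02, ?_⟩
        intro s hs1 hs2 hcon
        rcases lt_trichotomy s j with hsj | rfl | hsj
        · rcases eq_or_lt_of_le hs1 with rfl | hsi
          · rw [hi] at hcon; injection hcon with h'; omega
          · obtain ⟨u, hu1, hu2, hu3⟩ := ivt_up lev p hjunk hstep (j - s) s j (m - 1)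
              (m + 1) m le_rfl hsj hcon hj (by omega) (by omega)
            have huj : u < j := by
              rcases eq_or_lt_of_le hu2 with rfl | h
              · rw [hj] at hu3; injection hu3 with h'; omega
              · exact h
            have hui : i < u := lt_of_lt_of_le hsi hu1
            have := (hposint u (le_of_lt hui) huj).1 hu3
            omega
        · rw [hj] at hcon; injection hcon with h'; omega
        · obtain ⟨u, hu1, hu2, hu3⟩ := ivt_down lev p hjunk hstep (s - j) j s (m + 1)
            (m - 1) m le_rfl hsj hj hcon (by omega) (by omega)
          have huj : j < u := by
            rcases eq_or_lt_of_le hu1 with rfl | h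
            · rw [hj] at hu3; injection hu3 with h'; omega
            · exact h
          exact Nat.find_min hex (lt_of_le_of_lt hu2 hs2) ⟨huj, hu3⟩
      exact (hposint i le_rfl hij').2.2 hstab
    · -- Case B: m < m', the index k is α-stable at level m' - 1, contradicting hneg
      have hik' : i < k := lt_of_lt_of_le hij' hjk
      obtain ⟨t, ht1, ht2, ht3⟩ := ivt_up lev p hjunk hstep (k - i) i k m m' (m' - 1)
        le_rfl hik' hi hk (by omega) (by omega)
      have htk : t < k := by
        rcases eq_or_lt_of_le ht2 with rfl | h
        · rw [hk] at ht3; injection ht3 with h'; omega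
        · exact h
      have hPl' : lev (Nat.findGreatest (fun s => lev s = some (m' - 1)) k)
          = some (m' - 1) :=
        Nat.findGreatest_spec (P := fun s => lev s = some (m' - 1))
          (le_of_lt htk) ht3
      set l' := Nat.findGreatest (fun s => lev s = some (m' - 1)) k with hl'def
      have hl'k : l' ≤ k := Nat.findGreatest_le k
      have hl'k' : l' < k := by
        rcases eq_or_lt_of_le hl'k with h | h
        · exfalso; rw [h, hk] at hPl'; injection hPl' with h'; omega
        · exact h
      have hstab : IsStable lev p k := by
        refine ⟨m' - 1, l', l, le_of_lt hl'k', hkl', lev_le lev p hjunk hl, hPl', hl, ?_⟩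
        intro s hs1 hs2 hcon
        rcases lt_trichotomy s k with hsk | rfl | hsk
        · rcases eq_or_lt_of_le hs1 with rfl | hs1'
          · rw [hcon] at hPl'; injection hPl' with h'; omega
          · obtain ⟨u, hu1, hu2, hu3⟩ := ivt_up lev p hjunk hstep (k - s) s k
              (m' - 1 - 1) m' (m' - 1) le_rfl hsk hcon hk (by omega) (by omega)
            have huk : u < k := by
              rcases eq_or_lt_of_le hu2 with rfl | h
              · rw [hk] at hu3; injection hu3 with h'; omega
              · exact h
            exact Nat.findGreatest_is_greatest
              (P := fun s => lev s = some (m' - 1)) (lt_of_lt_of_le hs1' hu1)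
              (le_of_lt huk) hu3
        · rw [hk] at hcon; injection hcon with h'; omega
        · obtain ⟨u, hu1, hu2, hu3⟩ := ivt_down lev p hjunk hstep (s - k) k s m'
            (m' - 1 - 1) (m' - 1) le_rfl hsk hk hcon (by omega) (by omega)
          have hku : k < u := by
            rcases eq_or_lt_of_le hu1 with rfl | h
            · rw [hk] at hu3; injection hu3 with h'; omega
            · exact h
          have hul : u < l := lt_of_le_of_lt hu2 hs2
          have := (hnegint u (le_of_lt hku) hul).2.1 hu3
          omega
      exact (hnegint k le_rfl hkl').2.2 hstab
  · -- l ≤ i combined with k < l and i ≤ k: contradiction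
    omega
end

section
/- If the root operator f_α is defined on an LS-gallery δ (i.e. ⟨wt(δ), α⟩ − m_α^δ ≥ 1, where m_α^δ is the minimal level of an α-hyperplane met by δ), then no alcove Δ_s with j_α^δ ≤ s < k_α^δ is α-stable; in fact [j_α^δ, k_α^δ] is an α-directed section of δ. -/
/-- `m` is the minimal level of an α-hyperplane met by the gallery. -/
def MinLevel (lev : ℕ → Option ℤ) (p : ℕ) (m : ℤ) : Prop :=
  (∃ i, i ≤ p + 1 ∧ lev i = some m) ∧
    ∀ m', (∃ i, i ≤ p + 1 ∧ lev i = some m') → m ≤ m'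


/-- Discrete intermediate value theorem for step sequences. -/
theorem ivt_aux (lev : ℕ → Option ℤ) (p : ℕ)
    (hstep : ∀ a b ma mb, a < b → b ≤ p + 1 → lev a = some ma → lev b = some mb →
      (∀ s, a < s → s < b → lev s = none) → mb = ma + 1 ∨ mb = ma - 1 ∨ mb = ma) :
    ∀ n a b va vb c, b - a ≤ n → a ≤ b → b ≤ p + 1 → lev a = some va →
      lev b = some vb → vb ≤ c → c ≤ va → ∃ t, a ≤ t ∧ t ≤ b ∧ lev t = some c := by
  intro n
  induction n with
  | zero =>
    intro a b va vb c h1 h2 h3 ha hb hc1 hc2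
    have hab : a = b := by omega
    subst hab
    rw [ha] at hb
    injection hb with hb'
    have hcv : c = va := by omega
    exact ⟨a, le_refl a, le_refl a, by rw [hcv]; exact ha⟩
  | succ n ih =>
    intro a b va vb c h1 h2 h3 ha hb hc1 hc2
    by_cases hca : c = va
    · exact ⟨a, le_refl a, h2, by rw [hca]; exact ha⟩
    · have hclt : c < va := lt_of_le_of_ne hc2 hca
      have hab : a < b := by
        rcases lt_or_eq_of_le h2 with h | h
        · exact h
        · subst h; rw [ha] at hb; injection hb with h'; omega
      classical
      have hex : ∃ t, a < t ∧ (lev t).isSome := ⟨b, hab, by rw [hb]; rfl⟩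
      obtain ⟨hat, hsome⟩ := Nat.find_spec hex
      obtain ⟨v, hv⟩ := Option.isSome_iff_exists.mp hsome
      have hs0b : Nat.find hex ≤ b := Nat.find_min' hex ⟨hab, by rw [hb]; rfl⟩
      have hnone : ∀ t, a < t → t < Nat.find hex → lev t = none := by
        intro t h1' h2'
        by_contra h
        exact absurd (Nat.find_min' hex ⟨h1', Option.ne_none_iff_isSome.mp h⟩) (by omega)
      have hstep' := hstep a (Nat.find hex) va v hat (le_trans hs0b h3) ha hv hnone
      have hvc : c ≤ v := by rcases hstep' with h | h | h <;> omega
      obtain ⟨t, ht1, ht2, ht3⟩ := ih (Nat.find hex) b v vb c (by omega) hs0b h3 hv hb hc1 hvc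
      exact ⟨t, by omega, ht2, ht3⟩

/-- If the root operator `f_α` is defined on an LS-gallery `δ`, i.e.
`⟨wt(δ), α⟩ − m_α^δ ≥ 1` where `m_α^δ` is the minimal α-level met by `δ`,
`j = j_α^δ` is the maximal index with face level `m_α^δ` and `k = k_α^δ` is the minimal
index `> j` with face level `m_α^δ + 1`, then no alcove `Δ_s` with `j ≤ s < k` is
α-stable; in fact `[j_α^δ, k_α^δ]` is an α-directed section of `δ`. -/
theorem f_alpha_defined_implies_directed
    (lev : ℕ → Option ℤ) (p : ℕ) (m wv : ℤ) (j k : ℕ)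
    (hlev0 : lev 0 = some 0)
    (hjunk : ∀ i, p + 1 < i → lev i = none)
    (hstep : ∀ a b ma mb, a < b → b ≤ p + 1 → lev a = some ma → lev b = some mb →
      (∀ s, a < s → s < b → lev s = none) → mb = ma + 1 ∨ mb = ma - 1 ∨ mb = ma)
    (hmin : MinLevel lev p m)
    (hwt : lev (p + 1) = some wv)
    (hdef : 1 ≤ wv - m)
    (hj : lev j = some m) (hjp : j ≤ p + 1)
    (hjmax : ∀ j', j' ≤ p + 1 → lev j' = some m → j' ≤ j)
    (hk : lev k = some (m + 1)) (hkj : j < k) (hkp : k ≤ p + 1)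
    (hkmin : ∀ k', j < k' → lev k' = some (m + 1) → k ≤ k') :
    (∀ s, j ≤ s → s < k → ¬ IsStable lev p s) ∧ DirectedPos lev p j k := by
  classical
  have hjlt : j < p + 1 := by
    rcases lt_or_eq_of_le hjp with h | h
    · exact h
    · exfalso
      rw [h, hwt] at hj
      injection hj with h'
      omega
  have hex : ∃ t, j < t ∧ (lev t).isSome := ⟨p + 1, hjlt, by rw [hwt]; rfl⟩
  obtain ⟨hjs0, hsome⟩ := Nat.find_spec hex
  obtain ⟨v, hv⟩ := Option.isSome_iff_exists.mp hsome
  have hs0le : Nat.find hex ≤ p + 1 := Nat.find_min' hex ⟨hjlt, by rw [hwt]; rfl⟩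
  have hnone : ∀ t, j < t → t < Nat.find hex → lev t = none := by
    intro t hjt hts
    by_contra h
    exact absurd (Nat.find_min' hex ⟨hjt, Option.ne_none_iff_isSome.mp h⟩) (by omega)
  have hstep' := hstep j (Nat.find hex) m v hjs0 hs0le hj hv hnone
  have hvm : v = m + 1 := by
    rcases hstep' with h | h | h
    · exact h
    · exfalso
      have := hmin.2 v ⟨Nat.find hex, hs0le, hv⟩
      omega
    · exfalso
      have := hjmax (Nat.find hex) hs0le (by rw [hv, h])
      omega
  have hks0 : k ≤ Nat.find hex := hkmin (Nat.find hex) hjs0 (by rw [hv, hvm])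
  have nogap : ∀ t, j < t → t < k → lev t = none := fun t h1 h2 => hnone t h1 (by omega)
  have hstab : ∀ s, j ≤ s → s < k → ¬ IsStable lev p s := by
    rintro s hjs hsk ⟨m', l, r, hls, hsr, hrp, hl, hr, hno⟩
    have hlp : l ≤ p + 1 := by omega
    have hmm' : m ≤ m' := hmin.2 m' ⟨l, hlp, hl⟩
    rcases eq_or_lt_of_le hmm' with heq | hlt
    · have := hjmax r hrp (by rw [hr, heq])
      omega
    · have hlj : l ≤ j := by
        by_contra h
        push_neg at h
        rw [nogap l h (by omega)] at hl
        exact nomatch hl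
      obtain ⟨t, ht1, ht2, ht3⟩ := ivt_aux lev p hstep (j - l) l j m' m (m' - 1)
        (by omega) hlj hjp hl hj (by omega) (by omega)
      exact hno t ht1 (by omega) ht3
  refine ⟨hstab, m, hj, hk, fun s hjs hsk => ⟨?_, ?_, hstab s hjs hsk⟩⟩
  · intro h
    rcases eq_or_lt_of_le hjs with h' | h'
    · exact h'.symm
    · rw [nogap s h' hsk] at h
      exact nomatch h
  · intro h
    rcases eq_or_lt_of_le hjs with h' | h'
    · exfalso
      rw [← h', hj] at h
      injection h with h''
      omega
    · exact absurd (hkmin s h' h) (by omega)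
end

section
/- The root operator f_α, when defined on an LS-gallery δ, preserves α-stability: an index i is α-stable in δ if and only if i is α-stable in f_α δ. -/
/-- The α-level data of `f_α δ`: faces up to `j_α^δ` are unchanged, faces in
`(j_α^δ, k_α^δ]` are reflected in `H_{α, m_α^δ}` (level `n ↦ 2m − n`), and faces after
`k_α^δ` are translated by `−α∨` (level `n ↦ n − 2`). -/
def fLev (lev : ℕ → Option ℤ) (m : ℤ) (j k : ℕ) : ℕ → Option ℤ := fun i =>
  if i ≤ j then lev i
  else if i ≤ k then (lev i).map (fun n => 2 * m - n)
  else (lev i).map (fun n => n - 2)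

private lemma lev_le_bound (lev : ℕ → Option ℤ) (p : ℕ)
    (hjunk : ∀ i, p + 1 < i → lev i = none) {i : ℕ} {v : ℤ}
    (h : lev i = some v) : i ≤ p + 1 := by
  by_contra hc
  rw [hjunk i (by omega)] at h
  exact nomatch h

/-- Discrete intermediate value theorem for the level walk. -/
private lemma ivt (lev : ℕ → Option ℤ) (p : ℕ)
    (hstep : ∀ a b ma mb, a < b → b ≤ p + 1 → lev a = some ma → lev b = some mb →
      (∀ s, a < s → s < b → lev s = none) → mb = ma + 1 ∨ mb = ma - 1 ∨ mb = ma) :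
    ∀ n a b A B c, b - a ≤ n → a < b → b ≤ p + 1 → lev a = some A → lev b = some B →
      min A B ≤ c → c ≤ max A B → ∃ s, a ≤ s ∧ s ≤ b ∧ lev s = some c := by
  intro n
  induction n with
  | zero =>
    intro a b A B c h1 h2 _ _ _ _ _
    exact absurd h2 (by omega)
  | succ n ih =>
    intro a b A B c hn hab hbp hA hB hc1 hc2
    by_cases h : ∃ s, a < s ∧ s < b ∧ ∃ D, lev s = some D
    · obtain ⟨s, hs1, hs2, D, hD⟩ := h
      by_cases hc : min A D ≤ c ∧ c ≤ max A D
      · obtain ⟨t, ht1, ht2, ht3⟩ := ih a s A D c (by omega) hs1 (by omega) hA hD hc.1 hc.2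
        exact ⟨t, ht1, by omega, ht3⟩
      · have hc' : min D B ≤ c ∧ c ≤ max D B := by omega
        obtain ⟨t, ht1, ht2, ht3⟩ := ih s b D B c (by omega) hs2 hbp hD hB hc'.1 hc'.2
        exact ⟨t, by omega, ht2, ht3⟩
    · push_neg at h
      have hnone : ∀ s, a < s → s < b → lev s = none := by
        intro s h1 h2
        cases heq : lev s with
        | none => rfl
        | some D => exact absurd heq (h s h1 h2 D)
      have hd := hstep a b A B hab hbp hA hB hnone
      have hcab : c = A ∨ c = B := by omega
      rcases hcab with rfl | rfl
      · exact ⟨a, le_refl a, by omega, hA⟩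
      · exact ⟨b, by omega, le_refl b, hB⟩

/-- The root operator `f_α`, when defined on an LS-gallery `δ`, preserves
α-stability: an alcove index `i` is α-stable in `δ` if and only if it is α-stable in
`f_α δ`. -/
theorem f_alpha_preserves_stability
    (lev : ℕ → Option ℤ) (p : ℕ) (m wv : ℤ) (j k : ℕ)
    (hlev0 : lev 0 = some 0)
    (hjunk : ∀ i, p + 1 < i → lev i = none)
    (hstep : ∀ a b ma mb, a < b → b ≤ p + 1 → lev a = some ma → lev b = some mb →
      (∀ s, a < s → s < b → lev s = none) → mb = ma + 1 ∨ mb = ma - 1 ∨ mb = ma)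
    (hmin : MinLevel lev p m)
    (hwt : lev (p + 1) = some wv)
    (hdef : 1 ≤ wv - m)
    (hj : lev j = some m) (hjp : j ≤ p + 1)
    (hjmax : ∀ j', j' ≤ p + 1 → lev j' = some m → j' ≤ j)
    (hk : lev k = some (m + 1)) (hkj : j < k) (hkp : k ≤ p + 1)
    (hkmin : ∀ k', j < k' → lev k' = some (m + 1) → k ≤ k') :
    ∀ i, i ≤ p → (IsStable lev p i ↔ IsStable (fLev lev m j k) p i) := by
  -- every defined level is at least `m`
  have hminle : ∀ i v, lev i = some v → m ≤ v := fun i v h =>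
    hmin.2 v ⟨i, lev_le_bound lev p hjunk h, h⟩
  -- no face strictly between `j` and `k` lies in an α-hyperplane
  have hgap : ∀ s, j < s → s < k → lev s = none := by
    intro s
    induction s using Nat.strong_induction_on with
    | _ s ih =>
      intro hjs hsk
      cases heq : lev s with
      | none => rfl
      | some v =>
        exfalso
        have hsp : s ≤ p + 1 := by omega
        have hnone : ∀ t, j < t → t < s → lev t = none := fun t h1 h2 =>
          ih t h2 h1 (by omega)
        have hd := hstep j s m v hjs hsp hj heq hnone
        have hmv : m ≤ v := hminle s v heq
        rcases hd with h | h | h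
        · exact absurd (hkmin s hjs (by rw [heq, h])) (by omega)
        · omega
        · exact absurd (hjmax s hsp (by rw [heq, h])) (by omega)
  -- evaluation of fLev
  have hflow : ∀ s, s ≤ j → fLev lev m j k s = lev s := fun s h => if_pos h
  have hfgap : ∀ s, j < s → s < k → fLev lev m j k s = none := by
    intro s h1 h2
    show (if s ≤ j then lev s else if s ≤ k then (lev s).map _ else (lev s).map _) = none
    rw [if_neg (by omega), if_pos (by omega), hgap s h1 h2]
    rfl
  have hfhigh : ∀ s, k ≤ s → fLev lev m j k s = (lev s).map (fun n => n - 2) := by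
    intro s h
    show (if s ≤ j then lev s else if s ≤ k then (lev s).map _ else (lev s).map _)
      = (lev s).map (fun n => n - 2)
    rcases eq_or_lt_of_le h with rfl | h'
    · rw [if_neg (by omega), if_pos le_rfl, hk]
      simp only [Option.map_some]
      congr 1
      ring
    · rw [if_neg (by omega), if_neg (by omega)]
  -- no stability witness crosses `j` in lev
  have crossA : ∀ m' l r, l ≤ j → j < r → lev l = some m' → lev r = some m' →
      (∀ s, l ≤ s → s < r → lev s ≠ some (m' - 1)) → False := by
    intro m' l r hlj hjr hl hr hnos
    have hrp : r ≤ p + 1 := lev_le_bound lev p hjunk hr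
    have hm1 : m ≤ m' := hminle l m' hl
    have hne : m' ≠ m := fun h => absurd (hjmax r hrp (h ▸ hr)) (by omega)
    obtain ⟨s, hs1, hs2, hs3⟩ := ivt lev p hstep (r - j) j r m m' (m' - 1)
      le_rfl hjr hrp hj hr (by omega) (by omega)
    have hsr : s < r := by
      rcases Nat.lt_or_ge s r with h | h
      · exact h
      · have hrs : s = r := by omega
        subst hrs
        rw [hr] at hs3
        exact absurd (Option.some.inj hs3) (by omega)
    exact hnos s (by omega) hsr hs3
  -- no stability witness crosses `j` in fLev
  have crossB : ∀ m' l r, l ≤ j → j < r → fLev lev m j k l = some m' →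
      fLev lev m j k r = some m' →
      (∀ s, l ≤ s → s < r → fLev lev m j k s ≠ some (m' - 1)) → False := by
    intro m' l r hlj hjr hl hr hnos
    rw [hflow l hlj] at hl
    have hm1 : m ≤ m' := hminle l m' hl
    rcases lt_trichotomy r k with h | h | h
    · rw [hfgap r hjr h] at hr
      exact nomatch hr
    · subst h
      rw [hfhigh r le_rfl, hk] at hr
      simp only [Option.map_some] at hr
      have := Option.some.inj hr
      omega
    · rw [hfhigh r (le_of_lt h)] at hr
      obtain ⟨vr, hvr, hvr2⟩ := Option.map_eq_some_iff.mp hr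
      rcases eq_or_lt_of_le hm1 with heq | hm2
      · refine hnos k (by omega) h ?_
        rw [hfhigh k le_rfl, hk]
        simp only [Option.map_some]
        congr 1
        omega
      · have hrp : r ≤ p + 1 := lev_le_bound lev p hjunk hvr
        obtain ⟨s, hs1, hs2, hs3⟩ := ivt lev p hstep (r - k) k r (m + 1) vr (m' + 1)
          le_rfl h hrp hk hvr (by omega) (by omega)
        have hsr : s < r := by
          rcases Nat.lt_or_ge s r with h' | h'
          · exact h'
          · have hrs : s = r := by omega
            subst hrs
            rw [hvr] at hs3
            have := Option.some.inj hs3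
            omega
        refine hnos s (by omega) hsr ?_
        rw [hfhigh s hs1, hs3]
        simp only [Option.map_some]
        congr 1
        omega
  intro i hip
  rcases Nat.lt_or_ge i j with hij | hij
  · -- region strictly before j : witnesses are confined to [0, j]
    constructor
    · rintro ⟨m', l, r, hli, hir, hrp, hl, hr, hnos⟩
      rcases le_or_gt r j with hrj | hrj
      · exact ⟨m', l, r, hli, hir, hrp,
          by rw [hflow l (by omega)]; exact hl,
          by rw [hflow r hrj]; exact hr,
          fun s h1 h2 => by rw [hflow s (by omega)]; exact hnos s h1 h2⟩
      · exact (crossA m' l r (by omega) hrj hl hr hnos).elim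
    · rintro ⟨m', l, r, hli, hir, hrp, hl, hr, hnos⟩
      rcases le_or_gt r j with hrj | hrj
      · exact ⟨m', l, r, hli, hir, hrp,
          by rw [hflow l (by omega)] at hl; exact hl,
          by rw [hflow r hrj] at hr; exact hr,
          fun s h1 h2 => by
            have := hnos s h1 h2
            rwa [hflow s (by omega)] at this⟩
      · exact (crossB m' l r (by omega) hrj hl hr hnos).elim
  · rcases Nat.lt_or_ge i k with hik | hik
    · -- region [j, k) : unstable on both sides
      constructor
      · rintro ⟨m', l, r, hli, hir, hrp, hl, hr, hnos⟩
        have hlj : l ≤ j := by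
          by_contra hc
          rw [hgap l (by omega) (by omega)] at hl
          exact nomatch hl
        exact (crossA m' l r hlj (by omega) hl hr hnos).elim
      · rintro ⟨m', l, r, hli, hir, hrp, hl, hr, hnos⟩
        have hlj : l ≤ j := by
          by_contra hc
          rw [hfgap l (by omega) (by omega)] at hl
          exact nomatch hl
        exact (crossB m' l r hlj (by omega) hl hr hnos).elim
    · -- region [k, p] : witnesses are confined to [k, p+1], levels shift by 2
      constructor
      · rintro ⟨m', l, r, hli, hir, hrp, hl, hr, hnos⟩
        have hkl : k ≤ l := by
          rcases le_or_gt l j with hlj | hlj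
          · exact (crossA m' l r hlj (by omega) hl hr hnos).elim
          · by_contra hc
            rw [hgap l hlj (by omega)] at hl
            exact nomatch hl
        refine ⟨m' - 2, l, r, hli, hir, hrp,
          by rw [hfhigh l hkl, hl]; rfl,
          by rw [hfhigh r (by omega), hr]; rfl,
          fun s h1 h2 hcon => ?_⟩
        rw [hfhigh s (by omega)] at hcon
        obtain ⟨v, hv, hv2⟩ := Option.map_eq_some_iff.mp hcon
        have hveq : v = m' - 1 := by omega
        exact hnos s h1 h2 (hveq ▸ hv)
      · rintro ⟨m', l, r, hli, hir, hrp, hl, hr, hnos⟩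
        have hkl : k ≤ l := by
          rcases le_or_gt l j with hlj | hlj
          · exact (crossB m' l r hlj (by omega) hl hr hnos).elim
          · by_contra hc
            rw [hfgap l hlj (by omega)] at hl
            exact nomatch hl
        rw [hfhigh l hkl] at hl
        rw [hfhigh r (by omega)] at hr
        obtain ⟨vl, hvl, hvl2⟩ := Option.map_eq_some_iff.mp hl
        obtain ⟨vr, hvr, hvr2⟩ := Option.map_eq_some_iff.mp hr
        have hvleq : vl = m' + 2 := by omega
        have hvreq : vr = m' + 2 := by omega
        refine ⟨m' + 2, l, r, hli, hir, hrp, hvleq ▸ hvl, hvreq ▸ hvr,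
          fun s h1 h2 hcon => ?_⟩
        refine hnos s h1 h2 ?_
        rw [hfhigh s (by omega), hcon]
        simp only [Option.map_some]
        congr 1
        omega
end

section
/- For an LS-gallery δ and simple root α: the root operator f_α is defined on δ if and only if δ has at least one α-directed section; dually, e_α is defined if and only if δ has a (−α)-directed section. Moreover φ_α(δ), the maximal number of times f_α can be applied, equals the number of α-directed sections, and ε_α(δ) equals the number of (−α)-directed sections. -/
/-- The α-level data of `e_α δ`. -/
def eLev (lev : ℕ → Option ℤ) (m : ℤ) (s t : ℕ) : ℕ → Option ℤ := fun i =>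
  if i ≤ s then lev i
  else if i ≤ t then (lev i).map (fun n => 2 * (m + 1) - n)
  else (lev i).map (fun n => n + 2)

/-- One application of the root operator `f_α` (on α-level data): defined when
`⟨wt δ, α⟩ − m_α^δ ≥ 1`, with `j = j_α^δ` maximal at level `m_α^δ` and `k = k_α^δ`
minimal `> j` at level `m_α^δ + 1`. -/
def FStep (p : ℕ) (lev lev' : ℕ → Option ℤ) : Prop :=
  ∃ m wv : ℤ, ∃ j k : ℕ,
    MinLevel lev p m ∧ lev (p + 1) = some wv ∧ 1 ≤ wv - m ∧
    lev j = some m ∧ j ≤ p + 1 ∧ (∀ j', j' ≤ p + 1 → lev j' = some m → j' ≤ j) ∧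
    lev k = some (m + 1) ∧ j < k ∧ k ≤ p + 1 ∧
    (∀ k', j < k' → lev k' = some (m + 1) → k ≤ k') ∧
    lev' = fLev lev m j k

/-- One application of the root operator `e_α` (on α-level data): defined when
`m_α^δ ≤ −1`, with `t = t_α^δ` minimal at level `m_α^δ` and `s = s_α^δ ≤ t` maximal
at level `m_α^δ + 1`. -/
def EStep (p : ℕ) (lev lev' : ℕ → Option ℤ) : Prop :=
  ∃ m : ℤ, ∃ s t : ℕ,
    MinLevel lev p m ∧ m ≤ -1 ∧
    lev t = some m ∧ t ≤ p + 1 ∧ (∀ t', t' ≤ p + 1 → lev t' = some m → t ≤ t') ∧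
    lev s = some (m + 1) ∧ s ≤ t ∧ (∀ s', s' ≤ t → lev s' = some (m + 1) → s' ≤ s) ∧
    lev' = eLev lev m s t

/-- There is a chain of `n` successive applications of the given step relation
starting at `lev`. -/
def StepChain (step : (ℕ → Option ℤ) → (ℕ → Option ℤ) → Prop)
    (lev : ℕ → Option ℤ) (n : ℕ) : Prop :=
  ∃ f : ℕ → (ℕ → Option ℤ), f 0 = lev ∧ ∀ i < n, step (f i) (f (i + 1))

-- chunk 1
/-- Gallery hypotheses that are preserved by root operators. -/
def Gal (p : ℕ) (lev : ℕ → Option ℤ) : Prop :=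
  lev 0 = some 0 ∧ (∀ i, p + 1 < i → lev i = none) ∧
  (∀ a b : ℕ, ∀ ma mb : ℤ, a < b → b ≤ p + 1 → lev a = some ma → lev b = some mb →
    (∀ s, a < s → s < b → lev s = none) → mb = ma + 1 ∨ mb = ma - 1 ∨ mb = ma)

lemma gal_ivt_aux {p : ℕ} {lev : ℕ → Option ℤ} (hG : Gal p lev) :
    ∀ n a b : ℕ, ∀ x y c : ℤ, b - a ≤ n → a ≤ b → b ≤ p + 1 →
      lev a = some x → lev b = some y →
      ((x ≤ c ∧ c ≤ y) ∨ (y ≤ c ∧ c ≤ x)) →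
      ∃ s, a ≤ s ∧ s ≤ b ∧ lev s = some c := by
  intro n
  induction n with
  | zero =>
    intro a b x y c hn hab _ ha hb hc
    have : a = b := by omega
    subst this
    have : x = y := by rw [ha] at hb; exact Option.some_injective _ hb
    have : c = x := by omega
    exact ⟨a, le_refl a, le_refl a, by rw [ha, this]⟩
  | succ n ih =>
    intro a b x y c hn hab hbp ha hb hc
    rcases eq_or_lt_of_le hab with rfl | hab'
    · have : x = y := by rw [ha] at hb; exact Option.some_injective _ hb
      have : c = x := by omega
      exact ⟨a, le_refl a, le_refl a, by rw [ha, this]⟩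
    · by_cases hall : ∀ s, a < s → s < b → lev s = none
      · have := hG.2.2 a b x y hab' hbp ha hb hall
        have : c = x ∨ c = y := by omega
        rcases this with rfl | rfl
        · exact ⟨a, le_refl a, le_of_lt hab', ha⟩
        · exact ⟨b, le_of_lt hab', le_refl b, hb⟩
      · push_neg at hall
        obtain ⟨t, hat, htb, ht⟩ := hall
        obtain ⟨z, hz⟩ := Option.ne_none_iff_exists'.mp ht
        by_cases hcz : (x ≤ c ∧ c ≤ z) ∨ (z ≤ c ∧ c ≤ x)
        · obtain ⟨s, h1, h2, h3⟩ := ih a t x z c (by omega) (le_of_lt hat)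
            (by omega) ha hz hcz
          exact ⟨s, h1, le_trans h2 (le_of_lt htb), h3⟩
        · have hcz' : (z ≤ c ∧ c ≤ y) ∨ (y ≤ c ∧ c ≤ z) := by omega
          obtain ⟨s, h1, h2, h3⟩ := ih t b z y c (by omega) (le_of_lt htb)
            hbp hz hb hcz'
          exact ⟨s, le_trans (le_of_lt hat) h1, h2, h3⟩

lemma gal_ivt {p : ℕ} {lev : ℕ → Option ℤ} (hG : Gal p lev) {a b : ℕ} {x y c : ℤ}
    (hab : a ≤ b) (hbp : b ≤ p + 1) (ha : lev a = some x) (hb : lev b = some y)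
    (hc : (x ≤ c ∧ c ≤ y) ∨ (y ≤ c ∧ c ≤ x)) :
    ∃ s, a ≤ s ∧ s ≤ b ∧ lev s = some c :=
  gal_ivt_aux hG (b - a) a b x y c (le_refl _) hab hbp ha hb hc

lemma minLevel_exists {p : ℕ} {lev : ℕ → Option ℤ} (hG : Gal p lev) :
    ∃ m, MinLevel lev p m := by
  classical
  have hz := hG.1
  set S : Finset ℕ := (Finset.range (p + 2)).filter (fun i => (lev i).isSome) with hS
  have h0S : 0 ∈ S := by
    simp [hS, Finset.mem_filter, hz]
  set T : Finset ℤ := S.image (fun i => (lev i).getD 0) with hT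
  have hTne : T.Nonempty := ⟨_, Finset.mem_image_of_mem _ h0S⟩
  refine ⟨T.min' hTne, ?_, ?_⟩
  · obtain ⟨i, hiS, hi⟩ := Finset.mem_image.mp (T.min'_mem hTne)
    simp only [hS, Finset.mem_filter, Finset.mem_range] at hiS
    obtain ⟨w, hw⟩ := Option.isSome_iff_exists.mp hiS.2
    refine ⟨i, by omega, ?_⟩
    rw [hw] at hi ⊢
    simp at hi
    rw [hi]
  · rintro m' ⟨i, hip, hi⟩
    apply T.min'_le
    refine Finset.mem_image.mpr ⟨i, ?_, by simp [hi]⟩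
    simp [hS, Finset.mem_filter, Finset.mem_range, hi]
    omega

lemma minLevel_unique {p : ℕ} {lev : ℕ → Option ℤ} {m m' : ℤ}
    (h : MinLevel lev p m) (h' : MinLevel lev p m') : m = m' :=
  le_antisymm (h.2 m' h'.1) (h'.2 m h.1)
-- chunk 2 : FStep machinery
lemma fstep_gap {p : ℕ} {lev : ℕ → Option ℤ} {m : ℤ} {j k : ℕ} (hG : Gal p lev)
    (hm : MinLevel lev p m) (hj : lev j = some m)
    (hjmax : ∀ j', j' ≤ p + 1 → lev j' = some m → j' ≤ j)
    (hk : lev k = some (m + 1)) (hjk : j < k) (hkp : k ≤ p + 1)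
    (hkmin : ∀ k', j < k' → lev k' = some (m + 1) → k ≤ k') :
    ∀ i, j < i → i < k → lev i = none := by
  classical
  by_contra hcon
  push_neg at hcon
  obtain ⟨i, hji, hik, hi⟩ := hcon
  set S : Finset ℕ := (Finset.Ico (j + 1) k).filter (fun i => (lev i).isSome) with hS
  have hiS : i ∈ S := by
    simp only [hS, Finset.mem_filter, Finset.mem_Ico]
    exact ⟨⟨by omega, hik⟩, Option.isSome_iff_ne_none.mpr hi⟩
  have hSne : S.Nonempty := ⟨i, hiS⟩
  set i0 := S.min' hSne with hi0
  have hi0S : i0 ∈ S := S.min'_mem hSne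
  simp only [hS, Finset.mem_filter, Finset.mem_Ico] at hi0S
  obtain ⟨n, hn⟩ := Option.isSome_iff_exists.mp hi0S.2
  have hnone : ∀ s, j < s → s < i0 → lev s = none := by
    intro s hjs hsi0
    by_contra hs
    have : s ∈ S := by
      simp only [hS, Finset.mem_filter, Finset.mem_Ico]
      exact ⟨⟨by omega, by omega⟩, Option.isSome_iff_ne_none.mpr hs⟩
    have := S.min'_le s this
    omega
  have hi0p : i0 ≤ p + 1 := by omega
  have := hG.2.2 j i0 m n (by omega) hi0p hj hn hnone
  rcases this with h1 | h2 | h3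
  · subst h1; have := hkmin i0 (by omega) hn; omega
  · have := hm.2 n ⟨i0, hi0p, hn⟩; omega
  · subst h3; have := hjmax i0 hi0p hn; omega

lemma fLev_of_le {lev : ℕ → Option ℤ} {m : ℤ} {j k i : ℕ} (h : i ≤ j) :
    fLev lev m j k i = lev i := by simp [fLev, h]

lemma fLev_of_ge {lev : ℕ → Option ℤ} {m : ℤ} {j k i : ℕ}
    (hk : lev k = some (m + 1)) (h : k ≤ i) (hjk : j < k) :
    fLev lev m j k i = (lev i).map (fun n => n - 2) := by
  rcases eq_or_lt_of_le h with rfl | hlt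
  · simp only [fLev]
    rw [if_neg (by omega), if_pos (le_refl _), hk]
    simp only [Option.map_some]
    congr 1
    ring
  · simp only [fLev]
    rw [if_neg (by omega), if_neg (by omega)]

lemma fstep_effect {p : ℕ} {lev lev' : ℕ → Option ℤ} (hG : Gal p lev)
    (hF : FStep p lev lev') :
    ∃ m wv : ℤ, MinLevel lev p m ∧ lev (p + 1) = some wv ∧ 1 ≤ wv - m ∧
      Gal p lev' ∧ MinLevel lev' p (m - 1) ∧ lev' (p + 1) = some (wv - 2) := by
  obtain ⟨m, wv, j, k, hm, hwv, hge, hj, hjp, hjmax, hk, hjk, hkp, hkmin, hL⟩ := hF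
  refine ⟨m, wv, hm, hwv, hge, ?_⟩
  have hgap := fstep_gap hG hm hj hjmax hk hjk hkp hkmin
  have hmid : ∀ i, j < i → i < k → lev' i = none := by
    intro i h1 h2
    rw [hL]
    simp [fLev, (by omega : ¬ i ≤ j), (by omega : i ≤ k), hgap i h1 h2]
  have hnone_iff : ∀ i, lev' i = none ↔ lev i = none := by
    intro i
    rw [hL]
    rcases le_or_gt i j with h | h
    · rw [fLev_of_le h]
    · rcases lt_or_ge i k with h2 | h2
      · simp [fLev, (by omega : ¬ i ≤ j), (by omega : i ≤ k), hgap i h h2]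
      · rw [fLev_of_ge hk h2 hjk]; simp
  have hlev'j : lev' j = some m := by rw [hL, fLev_of_le (le_refl j)]; exact hj
  have hlev'k : lev' k = some (m - 1) := by
    rw [hL, fLev_of_ge hk (le_refl k) hjk, hk]; simp; ring
  have hlow : ∀ i n', i ≤ p + 1 → lev' i = some n' → m - 1 ≤ n' := by
    intro i n' hip hi
    rw [hL] at hi
    rcases le_or_gt i j with h | h
    · rw [fLev_of_le h] at hi
      have := hm.2 n' ⟨i, hip, hi⟩; omega
    · rcases lt_or_ge i k with h2 | h2
      · rw [fLev, if_neg (by omega), if_pos (by omega), hgap i h h2] at hi; simp at hi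
      · rw [fLev_of_ge hk h2 hjk] at hi
        obtain ⟨n, hn, hn2⟩ := Option.map_eq_some_iff.mp hi
        have h3 := hm.2 n ⟨i, hip, hn⟩
        have h4 : n ≠ m := fun hnm => by
          have := hjmax i hip (by rw [hn, hnm]); omega
        omega
  refine ⟨⟨?_, ?_, ?_⟩, ⟨⟨k, hkp, hlev'k⟩, ?_⟩, ?_⟩
  · rw [hL, fLev_of_le (Nat.zero_le j)]; exact hG.1
  · intro i hip
    rw [hnone_iff]; exact hG.2.1 i hip
  · -- step property
    intro a b ma' mb' hab hbp ha hb hbtw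
    have hbtw' : ∀ s, a < s → s < b → lev s = none := by
      intro s h1 h2; rw [← hnone_iff]; exact hbtw s h1 h2
    rcases le_or_gt b j with hbj | hbj
    · rw [hL, fLev_of_le (by omega)] at ha
      rw [hL, fLev_of_le hbj] at hb
      exact hG.2.2 a b ma' mb' hab hbp ha hb hbtw'
    · rcases le_or_gt k a with hka | hka
      · rw [hL, fLev_of_ge hk hka hjk] at ha
        rw [hL, fLev_of_ge hk (by omega) hjk] at hb
        obtain ⟨na, hna, hna2⟩ := Option.map_eq_some_iff.mp ha
        obtain ⟨nb, hnb, hnb2⟩ := Option.map_eq_some_iff.mp hb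
        have := hG.2.2 a b na nb hab hbp hna hnb hbtw'
        omega
      · -- a < k and j < b
        have haj : a = j := by
          by_contra hne
          rcases lt_or_ge a j with h | h
          · have := hbtw j (by omega) (by omega)
            rw [hL, fLev_of_le (le_refl j), hj] at this
            exact Option.some_ne_none _ this
          · -- j ≤ a < k, a ≠ j → j < a < k : lev' a none
            have := hmid a (by omega) hka
            rw [ha] at this; exact Option.some_ne_none _ this
        subst haj
        have hbk : b = k := by
          by_contra hne
          rcases lt_or_ge b k with h | h
          · have := hmid b hbj h
            rw [hb] at this; exact Option.some_ne_none _ this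
          · have := hbtw k (by omega) (by omega)
            rw [hlev'k] at this; exact Option.some_ne_none _ this
        subst hbk
        rw [hlev'j] at ha; rw [hlev'k] at hb
        have h1 : ma' = m := (Option.some_injective _ ha).symm
        have h2 : mb' = m - 1 := (Option.some_injective _ hb).symm
        omega
  · rintro m' ⟨i, hip, hi⟩
    exact hlow i m' hip hi
  · rw [hL, fLev_of_ge hk hkp hjk, hwv]; rfl

lemma fstep_exists {p : ℕ} {lev : ℕ → Option ℤ} {m wv : ℤ} (hG : Gal p lev)
    (hm : MinLevel lev p m) (hwv : lev (p + 1) = some wv) (hge : 1 ≤ wv - m) :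
    ∃ lev', FStep p lev lev' := by
  classical
  obtain ⟨i0, hi0p, hi0⟩ := hm.1
  set S : Finset ℕ := (Finset.range (p + 2)).filter (fun i => lev i = some m) with hS
  have hSne : S.Nonempty := ⟨i0, by simp [hS, Finset.mem_filter, Finset.mem_range]; exact ⟨by omega, hi0⟩⟩
  set j := S.max' hSne with hjdef
  have hjS : j ∈ S := S.max'_mem hSne
  simp only [hS, Finset.mem_filter, Finset.mem_range] at hjS
  have hj : lev j = some m := hjS.2
  have hjp : j ≤ p + 1 := by omega
  have hjmax : ∀ j', j' ≤ p + 1 → lev j' = some m → j' ≤ j := by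
    intro j' h1 h2
    exact S.le_max' j' (by simp [hS, Finset.mem_filter, Finset.mem_range]; exact ⟨by omega, h2⟩)
  -- find k via IVT between j and p+1
  have hjne : j ≠ p + 1 := by
    intro h; rw [h, hwv] at hj
    have := Option.some_injective _ hj; omega
  obtain ⟨s, hs1, hs2, hs3⟩ := gal_ivt hG (a := j) (b := p + 1) hjp (le_refl _) hj hwv
    (Or.inl ⟨by omega, by omega⟩) (c := m + 1)
  have hsj : j < s := by
    rcases eq_or_lt_of_le hs1 with rfl | h
    · rw [hj] at hs3; have := Option.some_injective _ hs3; omega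
    · exact h
  set K : Finset ℕ := (Finset.range (p + 2)).filter (fun i => j < i ∧ lev i = some (m + 1)) with hK
  have hKne : K.Nonempty := ⟨s, by simp [hK, Finset.mem_filter, Finset.mem_range]; exact ⟨by omega, hsj, hs3⟩⟩
  set k := K.min' hKne with hkdef
  have hkK : k ∈ K := K.min'_mem hKne
  simp only [hK, Finset.mem_filter, Finset.mem_range] at hkK
  refine ⟨fLev lev m j k, m, wv, j, k, hm, hwv, hge, hj, hjp, hjmax, hkK.2.2, hkK.2.1,
    by omega, ?_, rfl⟩
  intro k' hk' hk'2
  have hk'p : k' ≤ p + 1 := by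
    by_contra h
    rw [hG.2.1 k' (by omega)] at hk'2
    simp at hk'2
  exact K.min'_le k' (by simp [hK, Finset.mem_filter, Finset.mem_range]; exact ⟨by omega, hk', hk'2⟩)
-- chunk 3 : EStep machinery
lemma estep_st {lev : ℕ → Option ℤ} {m : ℤ} {s t : ℕ}
    (ht : lev t = some m) (hs : lev s = some (m + 1)) (hst : s ≤ t) : s < t := by
  rcases eq_or_lt_of_le hst with rfl | h
  · rw [ht] at hs; have := Option.some_injective _ hs; omega
  · exact h

lemma estep_gap {p : ℕ} {lev : ℕ → Option ℤ} {m : ℤ} {s t : ℕ} (hG : Gal p lev)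
    (hm : MinLevel lev p m)
    (ht : lev t = some m) (htp : t ≤ p + 1)
    (htmin : ∀ t', t' ≤ p + 1 → lev t' = some m → t ≤ t')
    (hs : lev s = some (m + 1)) (hst : s ≤ t)
    (hsmax : ∀ s', s' ≤ t → lev s' = some (m + 1) → s' ≤ s) :
    ∀ i, s < i → i < t → lev i = none := by
  classical
  by_contra hcon
  push_neg at hcon
  obtain ⟨i, hsi, hit, hi⟩ := hcon
  set S : Finset ℕ := (Finset.Ico (s + 1) t).filter (fun i => (lev i).isSome) with hS
  have hiS : i ∈ S := by
    simp only [hS, Finset.mem_filter, Finset.mem_Ico]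
    exact ⟨⟨by omega, hit⟩, Option.isSome_iff_ne_none.mpr hi⟩
  have hSne : S.Nonempty := ⟨i, hiS⟩
  set i0 := S.min' hSne with hi0
  have hi0S : i0 ∈ S := S.min'_mem hSne
  simp only [hS, Finset.mem_filter, Finset.mem_Ico] at hi0S
  obtain ⟨n, hn⟩ := Option.isSome_iff_exists.mp hi0S.2
  have hnone : ∀ u, s < u → u < i0 → lev u = none := by
    intro u h1 h2
    by_contra hu
    have : u ∈ S := by
      simp only [hS, Finset.mem_filter, Finset.mem_Ico]
      exact ⟨⟨by omega, by omega⟩, Option.isSome_iff_ne_none.mpr hu⟩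
    have := S.min'_le u this
    omega
  have hi0p : i0 ≤ p + 1 := by omega
  have := hG.2.2 s i0 (m + 1) n (by omega) hi0p hs hn hnone
  have hnm : m ≤ n := hm.2 n ⟨i0, hi0p, hn⟩
  rcases this with h1 | h2 | h3
  · -- n = m + 2 : IVT down to m+1 between i0 and t
    obtain ⟨s', h1', h2', h3'⟩ := gal_ivt hG (a := i0) (b := t) (by omega) htp hn ht
      (Or.inr ⟨by omega, by omega⟩) (c := m + 1)
    have := hsmax s' h2' h3'
    omega
  · -- n = m + 1 - 1 = m : contradicts t minimal
    have := htmin i0 hi0p (by rw [hn]; congr 1; omega)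
    omega
  · -- n = m + 1 : contradicts s maximal
    have := hsmax i0 (by omega) (by rw [hn, h3])
    omega

lemma eLev_of_le {lev : ℕ → Option ℤ} {m : ℤ} {s t i : ℕ} (h : i ≤ s) :
    eLev lev m s t i = lev i := by simp [eLev, h]

lemma eLev_of_ge {lev : ℕ → Option ℤ} {m : ℤ} {s t i : ℕ}
    (ht : lev t = some m) (h : t ≤ i) (hst : s < t) :
    eLev lev m s t i = (lev i).map (fun n => n + 2) := by
  rcases eq_or_lt_of_le h with rfl | hlt
  · simp only [eLev]
    rw [if_neg (by omega), if_pos (le_refl _), ht]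
    simp only [Option.map_some]
    congr 1
    ring
  · simp only [eLev]
    rw [if_neg (by omega), if_neg (by omega)]

lemma estep_effect {p : ℕ} {lev lev' : ℕ → Option ℤ} (hG : Gal p lev)
    (hE : EStep p lev lev') :
    ∃ m : ℤ, MinLevel lev p m ∧ m ≤ -1 ∧
      Gal p lev' ∧ MinLevel lev' p (m + 1) ∧
      (∀ wv : ℤ, lev (p + 1) = some wv → lev' (p + 1) = some (wv + 2)) := by
  obtain ⟨m, s, t, hm, hneg, ht, htp, htmin, hs, hst, hsmax, hL⟩ := hE
  refine ⟨m, hm, hneg, ?_⟩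
  have hst' : s < t := estep_st ht hs hst
  have hgap := estep_gap hG hm ht htp htmin hs hst hsmax
  have hmid : ∀ i, s < i → i < t → lev' i = none := by
    intro i h1 h2
    rw [hL]
    simp [eLev, (by omega : ¬ i ≤ s), (by omega : i ≤ t), hgap i h1 h2]
  have hnone_iff : ∀ i, lev' i = none ↔ lev i = none := by
    intro i
    rw [hL]
    rcases le_or_gt i s with h | h
    · rw [eLev_of_le h]
    · rcases lt_or_ge i t with h2 | h2
      · simp [eLev, (by omega : ¬ i ≤ s), (by omega : i ≤ t), hgap i h h2]
      · rw [eLev_of_ge ht h2 hst']; simp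
  have hlev's : lev' s = some (m + 1) := by rw [hL, eLev_of_le (le_refl s)]; exact hs
  have hlev't : lev' t = some (m + 2) := by
    rw [hL, eLev_of_ge ht (le_refl t) hst', ht]; simp
  have hlow : ∀ i n', i ≤ p + 1 → lev' i = some n' → m + 1 ≤ n' := by
    intro i n' hip hi
    rw [hL] at hi
    rcases le_or_gt i s with h | h
    · rw [eLev_of_le h] at hi
      have h3 := hm.2 n' ⟨i, hip, hi⟩
      have h4 : n' ≠ m := fun hnm => by
        have := htmin i hip (by rw [hi, hnm]); omega
      omega
    · rcases lt_or_ge i t with h2 | h2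
      · rw [eLev, if_neg (by omega), if_pos (by omega), hgap i h h2] at hi; simp at hi
      · rw [eLev_of_ge ht h2 hst'] at hi
        obtain ⟨n, hn, hn2⟩ := Option.map_eq_some_iff.mp hi
        have h3 := hm.2 n ⟨i, hip, hn⟩
        omega
  refine ⟨⟨?_, ?_, ?_⟩, ⟨⟨s, by omega, hlev's⟩, ?_⟩, ?_⟩
  · rw [hL, eLev_of_le (Nat.zero_le s)]; exact hG.1
  · intro i hip
    rw [hnone_iff]; exact hG.2.1 i hip
  · intro a b ma' mb' hab hbp ha hb hbtw
    have hbtw' : ∀ u, a < u → u < b → lev u = none := by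
      intro u h1 h2; rw [← hnone_iff]; exact hbtw u h1 h2
    rcases le_or_gt b s with hbs | hbs
    · rw [hL, eLev_of_le (by omega)] at ha
      rw [hL, eLev_of_le hbs] at hb
      exact hG.2.2 a b ma' mb' hab hbp ha hb hbtw'
    · rcases le_or_gt t a with hta | hta
      · rw [hL, eLev_of_ge ht hta hst'] at ha
        rw [hL, eLev_of_ge ht (by omega) hst'] at hb
        obtain ⟨na, hna, hna2⟩ := Option.map_eq_some_iff.mp ha
        obtain ⟨nb, hnb, hnb2⟩ := Option.map_eq_some_iff.mp hb
        have := hG.2.2 a b na nb hab hbp hna hnb hbtw'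
        omega
      · have has : a = s := by
          by_contra hne
          rcases lt_or_ge a s with h | h
          · have := hbtw s (by omega) (by omega)
            rw [hlev's] at this; exact Option.some_ne_none _ this
          · have := hmid a (by omega) hta
            rw [ha] at this; exact Option.some_ne_none _ this
        subst has
        have hbt : b = t := by
          by_contra hne
          rcases lt_or_ge b t with h | h
          · have := hmid b hbs h
            rw [hb] at this; exact Option.some_ne_none _ this
          · have := hbtw t (by omega) (by omega)
            rw [hlev't] at this; exact Option.some_ne_none _ this
        subst hbt
        rw [hlev's] at ha; rw [hlev't] at hb
        have h1 : ma' = m + 1 := (Option.some_injective _ ha).symm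
        have h2 : mb' = m + 2 := (Option.some_injective _ hb).symm
        omega
  · rintro m' ⟨i, hip, hi⟩
    exact hlow i m' hip hi
  · intro wv hwv
    rw [hL, eLev_of_ge ht htp hst', hwv]; rfl

lemma estep_exists {p : ℕ} {lev : ℕ → Option ℤ} {m : ℤ} (hG : Gal p lev)
    (hm : MinLevel lev p m) (hneg : m ≤ -1) :
    ∃ lev', EStep p lev lev' := by
  classical
  obtain ⟨i0, hi0p, hi0⟩ := hm.1
  set T : Finset ℕ := (Finset.range (p + 2)).filter (fun i => lev i = some m) with hT
  have hTne : T.Nonempty := ⟨i0, by simp [hT, Finset.mem_filter, Finset.mem_range]; exact ⟨by omega, hi0⟩⟩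
  set t := T.min' hTne with htdef
  have htT : t ∈ T := T.min'_mem hTne
  simp only [hT, Finset.mem_filter, Finset.mem_range] at htT
  have ht : lev t = some m := htT.2
  have htp : t ≤ p + 1 := by omega
  have htmin : ∀ t', t' ≤ p + 1 → lev t' = some m → t ≤ t' := by
    intro t' h1 h2
    exact T.min'_le t' (by simp [hT, Finset.mem_filter, Finset.mem_range]; exact ⟨by omega, h2⟩)
  obtain ⟨s0, hs01, hs02, hs03⟩ := gal_ivt hG (a := 0) (b := t) (Nat.zero_le t) htp hG.1 ht
    (Or.inr ⟨by omega, by omega⟩) (c := m + 1)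
  set S : Finset ℕ := (Finset.range (t + 1)).filter (fun i => lev i = some (m + 1)) with hS
  have hSne : S.Nonempty := ⟨s0, by simp [hS, Finset.mem_filter, Finset.mem_range]; exact ⟨by omega, hs03⟩⟩
  set s := S.max' hSne with hsdef
  have hsS : s ∈ S := S.max'_mem hSne
  simp only [hS, Finset.mem_filter, Finset.mem_range] at hsS
  refine ⟨eLev lev m s t, m, s, t, hm, hneg, ht, htp, htmin, hsS.2, by omega, ?_, rfl⟩
  intro s' h1 h2
  exact S.le_max' s' (by simp [hS, Finset.mem_filter, Finset.mem_range]; exact ⟨by omega, h2⟩)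
-- chunk 4 : step chains
lemma stepChain_zero (step : (ℕ → Option ℤ) → (ℕ → Option ℤ) → Prop)
    (lev : ℕ → Option ℤ) : StepChain step lev 0 :=
  ⟨fun _ => lev, rfl, fun i hi => absurd hi (Nat.not_lt_zero i)⟩

lemma stepChain_succ_iff (step : (ℕ → Option ℤ) → (ℕ → Option ℤ) → Prop)
    (lev : ℕ → Option ℤ) (n : ℕ) :
    StepChain step lev (n + 1) ↔ ∃ lev', step lev lev' ∧ StepChain step lev' n := by
  constructor
  · rintro ⟨f, h0, h⟩
    refine ⟨f 1, by rw [← h0]; exact h 0 (by omega), fun i => f (i + 1), rfl, ?_⟩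
    intro i hi
    exact h (i + 1) (by omega)
  · rintro ⟨lev', hstep, f, h0, h⟩
    refine ⟨fun i => match i with | 0 => lev | (i + 1) => f i, rfl, ?_⟩
    intro i hi
    match i with
    | 0 => simpa [h0] using hstep
    | (i + 1) => exact h i (by omega)

lemma fchain_iff {p : ℕ} : ∀ (n : ℕ) (lev : ℕ → Option ℤ) (m wv : ℤ),
    Gal p lev → MinLevel lev p m → lev (p + 1) = some wv →
    (StepChain (FStep p) lev n ↔ (n : ℤ) ≤ wv - m) := by
  intro n
  induction n with
  | zero =>
    intro lev m wv hG hm hwv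
    
    have : m ≤ wv := hm.2 wv ⟨p + 1, le_refl _, hwv⟩
    exact iff_of_true (stepChain_zero _ _) (by omega)
  | succ n ih =>
    intro lev m wv hG hm hwv
    rw [stepChain_succ_iff]
    constructor
    · rintro ⟨lev', hstep, hchain⟩
      obtain ⟨m0, wv0, hm0, hwv0, hge, hG', hm', hwv'⟩ := fstep_effect hG hstep
      have h1 : m0 = m := minLevel_unique hm0 hm
      have h2 : wv0 = wv := by rw [hwv0] at hwv; exact Option.some_injective _ hwv
      subst h1; subst h2
      have := (ih lev' (m0 - 1) (wv0 - 2) hG' hm' hwv').mp hchain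
      push_cast
      omega
    · intro hle
      push_cast at hle
      have hge : 1 ≤ wv - m := by omega
      obtain ⟨lev', hstep⟩ := fstep_exists hG hm hwv hge
      obtain ⟨m0, wv0, hm0, hwv0, _, hG', hm', hwv'⟩ := fstep_effect hG hstep
      have h1 : m0 = m := minLevel_unique hm0 hm
      have h2 : wv0 = wv := by rw [hwv0] at hwv; exact Option.some_injective _ hwv
      subst h1; subst h2
      exact ⟨lev', hstep, (ih lev' (m0 - 1) (wv0 - 2) hG' hm' hwv').mpr (by omega)⟩

lemma echain_iff {p : ℕ} : ∀ (n : ℕ) (lev : ℕ → Option ℤ) (m : ℤ),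
    Gal p lev → MinLevel lev p m →
    (StepChain (EStep p) lev n ↔ (n : ℤ) ≤ -m) := by
  intro n
  induction n with
  | zero =>
    intro lev m hG hm
    
    have : m ≤ 0 := hm.2 0 ⟨0, by omega, hG.1⟩
    exact iff_of_true (stepChain_zero _ _) (by omega)
  | succ n ih =>
    intro lev m hG hm
    rw [stepChain_succ_iff]
    constructor
    · rintro ⟨lev', hstep, hchain⟩
      obtain ⟨m0, hm0, hneg, hG', hm', _⟩ := estep_effect hG hstep
      have h1 : m0 = m := minLevel_unique hm0 hm
      subst h1
      have := (ih lev' (m0 + 1) hG' hm').mp hchain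
      push_cast
      omega
    · intro hle
      push_cast at hle
      have hneg : m ≤ -1 := by omega
      obtain ⟨lev', hstep⟩ := estep_exists hG hm hneg
      obtain ⟨m0, hm0, _, hG', hm', _⟩ := estep_effect hG hstep
      have h1 : m0 = m := minLevel_unique hm0 hm
      subst h1
      exact ⟨lev', hstep, (ih lev' (m0 + 1) hG' hm').mpr (by omega)⟩
-- chunk 5 : the walk along L
lemma walk_main {p : ℕ} {lev : ℕ → Option ℤ} (hG : Gal p lev)
    (L : List ℕ) (hchain : L.Chain' (· < ·)) (hhead : L.head? = some 0)
    (hlast : L.getLast? = some (p + 1))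
    (hsec : L.Chain' (fun a b =>
      DirectedPos lev p a b ∨ DirectedNeg lev p a b ∨ StableSection lev p a b))
    {m : ℤ} (hm : MinLevel lev p m) :
    ∃ wv : ℤ, lev (p + 1) = some wv ∧
      ((∃ q ∈ L.zip L.tail, DirectedPos lev p q.1 q.2) ↔ 1 ≤ wv - m) ∧
      ((∃ q ∈ L.zip L.tail, DirectedNeg lev p q.1 q.2) ↔ m ≤ -1) ∧
      ((Nat.card {q : ℕ × ℕ // q ∈ L.zip L.tail ∧ DirectedPos lev p q.1 q.2} : ℤ)
        = wv - m) ∧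
      ((Nat.card {q : ℕ × ℕ // q ∈ L.zip L.tail ∧ DirectedNeg lev p q.1 q.2} : ℤ)
        = -m) := by
  classical
  set nL := L.length with hnL
  have hLne : L ≠ [] := by intro h; rw [h] at hhead; simp at hhead
  have hn1 : 1 ≤ nL := List.length_pos_iff.mpr hLne
  set idx : ℕ → ℕ := fun u => L.getD u 0 with hidxdef
  have hidxe : ∀ u, (h : u < nL) → idx u = L.get ⟨u, h⟩ := by
    intro u h
    simp only [hidxdef]
    rw [List.getD_eq_getElem?_getD, List.getElem?_eq_getElem (by omega)]; rfl
  have hidx0 : idx 0 = 0 := by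
    obtain ⟨a, t, rfl⟩ := List.exists_cons_of_ne_nil hLne
    simp only [List.head?] at hhead
    simp only [hidxdef, List.getD]
    simp [Option.some_injective _ hhead]
  have hidxlast : idx (nL - 1) = p + 1 := by
    rw [List.getLast?_eq_getLast_of_ne_nil hLne] at hlast
    have h2 := Option.some_injective _ hlast
    rw [hidxe (nL - 1) (by omega)]
    rw [← h2, List.getLast_eq_getElem]; rfl
  have hmono : ∀ u v, u < v → v < nL → idx u < idx v := by
    have hp := List.isChain_iff_pairwise.mp hchain
    intro u v huv hv
    have := List.pairwise_iff_get.mp hp ⟨u, by omega⟩ ⟨v, hv⟩ huv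
    rwa [hidxe u (by omega), hidxe v hv]
  have hidxle : ∀ u, u < nL → idx u ≤ p + 1 := by
    intro u hu
    rcases eq_or_lt_of_le (by omega : u ≤ nL - 1) with h | h
    · rw [h, hidxlast]
    · have := hmono u (nL - 1) h (by omega)
      omega
  have hsec' : ∀ u, u + 1 < nL → DirectedPos lev p (idx u) (idx (u+1)) ∨
      DirectedNeg lev p (idx u) (idx (u+1)) ∨ StableSection lev p (idx u) (idx (u+1)) := by
    intro u hu
    have := List.isChain_iff_getElem.mp hsec u (by omega)
    simpa only [hidxe u (by omega), hidxe (u+1) hu, List.get_eq_getElem] using this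
  have hn2 : 2 ≤ nL := by
    by_contra h
    have h1 : nL - 1 = 0 := by omega
    rw [h1, hidx0] at hidxlast
    omega
  have hμex : ∀ u, u < nL → ∃ x, lev (idx u) = some x := by
    intro u hu
    rcases lt_or_ge (u + 1) nL with h | h
    · rcases hsec' u h with ⟨m', h1, _⟩ | ⟨m', h1, _⟩ | ⟨m', k, _, _, _, hpair, _⟩
      · exact ⟨m', h1⟩
      · exact ⟨m', h1⟩
      · exact ⟨m', hpair.1⟩
    · have hu' : u = nL - 1 := by omega
      have hv : (u - 1) + 1 < nL := by omega
      have he : (u - 1) + 1 = u := by omega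
      rcases hsec' (u - 1) hv with ⟨m', _, h2, _⟩ | ⟨m', _, h2, _⟩ | ⟨m', k, _, _, _, hpair, _⟩
      · exact ⟨m' + 1, by rw [← he]; exact h2⟩
      · exact ⟨m' - 1, by rw [← he]; exact h2⟩
      · exact ⟨m', by rw [← he]; exact hpair.2.1⟩
  set μ : ℕ → ℤ := fun u => (lev (idx u)).getD 0 with hμdef
  have hμ : ∀ u, u < nL → lev (idx u) = some (μ u) := by
    intro u hu
    obtain ⟨x, hx⟩ := hμex u hu
    simp only [hμdef, hx]
    rfl
  have hμ0 : μ 0 = 0 := by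
    have := hμ 0 (by omega)
    rw [hidx0, hG.1] at this
    exact (Option.some_injective _ this).symm
  have hwv : lev (p + 1) = some (μ (nL - 1)) := by
    rw [← hidxlast]; exact hμ (nL - 1) (by omega)
  -- step values
  have hPosv : ∀ u, u + 1 < nL → DirectedPos lev p (idx u) (idx (u+1)) →
      μ (u+1) = μ u + 1 := by
    rintro u hu ⟨m', h1, h2, _⟩
    rw [hμ u (by omega)] at h1
    rw [hμ (u+1) hu] at h2
    have e1 := Option.some_injective _ h1
    have e2 := Option.some_injective _ h2
    omega
  have hNegv : ∀ u, u + 1 < nL → DirectedNeg lev p (idx u) (idx (u+1)) →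
      μ (u+1) = μ u - 1 := by
    rintro u hu ⟨m', h1, h2, _⟩
    rw [hμ u (by omega)] at h1
    rw [hμ (u+1) hu] at h2
    have e1 := Option.some_injective _ h1
    have e2 := Option.some_injective _ h2
    omega
  have hStabv : ∀ u, u + 1 < nL → StableSection lev p (idx u) (idx (u+1)) →
      μ (u+1) = μ u := by
    rintro u hu ⟨m', k, _, _, _, hpair, _⟩
    have h1 := hpair.1
    have h2 := hpair.2.1
    rw [hμ u (by omega)] at h1
    rw [hμ (u+1) hu] at h2
    have e1 := Option.some_injective _ h1
    have e2 := Option.some_injective _ h2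
    omega
  have hstep3 : ∀ u, u + 1 < nL → μ (u+1) = μ u + 1 ∨ μ (u+1) = μ u - 1 ∨
      μ (u+1) = μ u := by
    intro u hu
    rcases hsec' u hu with h | h | h
    · exact Or.inl (hPosv u hu h)
    · exact Or.inr (Or.inl (hNegv u hu h))
    · exact Or.inr (Or.inr (hStabv u hu h))
  -- interiors
  have hposint : ∀ u, u + 1 < nL → DirectedPos lev p (idx u) (idx (u+1)) →
      ∀ i, idx u < i → i < idx (u+1) → lev i = none := by
    rintro u hu ⟨m', ha, hb, hcond⟩ i h1 h2
    have hbp : idx (u+1) ≤ p + 1 := hidxle (u+1) hu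
    by_contra hi
    set S : Finset ℕ := (Finset.Ico (idx u + 1) (idx (u+1))).filter
      (fun i => (lev i).isSome) with hS
    have hiS : i ∈ S := by
      simp only [hS, Finset.mem_filter, Finset.mem_Ico]
      exact ⟨⟨by omega, h2⟩, Option.isSome_iff_ne_none.mpr hi⟩
    have hSne : S.Nonempty := ⟨i, hiS⟩
    have hi0S := S.min'_mem hSne
    set i0 := S.min' hSne with hi0d
    simp only [hS, Finset.mem_filter, Finset.mem_Ico] at hi0S
    obtain ⟨nn, hnn⟩ := Option.isSome_iff_exists.mp hi0S.2
    have hnone : ∀ s, idx u < s → s < i0 → lev s = none := by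
      intro s hs1 hs2
      by_contra hs
      have : s ∈ S := by
        simp only [hS, Finset.mem_filter, Finset.mem_Ico]
        exact ⟨⟨by omega, by omega⟩, Option.isSome_iff_ne_none.mpr hs⟩
      have := S.min'_le s this
      omega
    have hi0p : i0 ≤ p + 1 := by omega
    rcases hG.2.2 (idx u) i0 m' nn (by omega) hi0p ha hnn hnone with hc | hc | hc
    · have := (hcond i0 (by omega) (by omega)).2.1 (by rw [hnn, hc])
      omega
    · obtain ⟨s', hs1, hs2, hs3⟩ := gal_ivt hG (a := i0) (b := idx (u+1))
        (by omega) hbp hnn hb (c := m') (Or.inl ⟨by omega, by omega⟩)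
      rcases eq_or_lt_of_le hs2 with he | hlt
      · rw [he, hb] at hs3
        have := Option.some_injective _ hs3
        omega
      · have := (hcond s' (by omega) hlt).1 hs3
        omega
    · have := (hcond i0 (by omega) (by omega)).1 (by rw [hnn, hc])
      omega
  have hnegint : ∀ u, u + 1 < nL → DirectedNeg lev p (idx u) (idx (u+1)) →
      ∀ i, idx u < i → i < idx (u+1) → lev i = none := by
    rintro u hu ⟨m', ha, hb, hcond⟩ i h1 h2
    have hbp : idx (u+1) ≤ p + 1 := hidxle (u+1) hu
    by_contra hi
    set S : Finset ℕ := (Finset.Ico (idx u + 1) (idx (u+1))).filter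
      (fun i => (lev i).isSome) with hS
    have hiS : i ∈ S := by
      simp only [hS, Finset.mem_filter, Finset.mem_Ico]
      exact ⟨⟨by omega, h2⟩, Option.isSome_iff_ne_none.mpr hi⟩
    have hSne : S.Nonempty := ⟨i, hiS⟩
    have hi0S := S.min'_mem hSne
    set i0 := S.min' hSne with hi0d
    simp only [hS, Finset.mem_filter, Finset.mem_Ico] at hi0S
    obtain ⟨nn, hnn⟩ := Option.isSome_iff_exists.mp hi0S.2
    have hnone : ∀ s, idx u < s → s < i0 → lev s = none := by
      intro s hs1 hs2
      by_contra hs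
      have : s ∈ S := by
        simp only [hS, Finset.mem_filter, Finset.mem_Ico]
        exact ⟨⟨by omega, by omega⟩, Option.isSome_iff_ne_none.mpr hs⟩
      have := S.min'_le s this
      omega
    have hi0p : i0 ≤ p + 1 := by omega
    rcases hG.2.2 (idx u) i0 m' nn (by omega) hi0p ha hnn hnone with hc | hc | hc
    · obtain ⟨s', hs1, hs2, hs3⟩ := gal_ivt hG (a := i0) (b := idx (u+1))
        (by omega) hbp hnn hb (c := m') (Or.inr ⟨by omega, by omega⟩)
      rcases eq_or_lt_of_le hs2 with he | hlt
      · rw [he, hb] at hs3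
        have := Option.some_injective _ hs3
        omega
      · have := (hcond s' (by omega) hlt).1 hs3
        omega
    · have := (hcond i0 (by omega) (by omega)).2.1 (by rw [hnn, hc])
      omega
    · have := (hcond i0 (by omega) (by omega)).1 (by rw [hnn, hc])
      omega
  have hstabint : ∀ u, u + 1 < nL → StableSection lev p (idx u) (idx (u+1)) →
      ∀ i z, idx u < i → i < idx (u+1) → lev i = some z → μ u ≤ z := by
    rintro u hu ⟨m', k, _, _, _, hpair, _⟩ i z h1 h2 hz
    have hbp : idx (u+1) ≤ p + 1 := hidxle (u+1) hu
    have hm' : m' = μ u := by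
      have := hpair.1
      rw [hμ u (by omega)] at this
      exact (Option.some_injective _ this).symm
    subst hm'
    by_contra hlt
    push_neg at hlt
    have hz1 : z ≠ μ u - 1 := by
      intro he
      exact hpair.2.2 i (by omega) h2 (by rw [hz, he])
    have hz2 : z ≤ μ u - 2 := by omega
    obtain ⟨s', hs1, hs2, hs3⟩ := gal_ivt hG (a := idx u) (b := i)
      (by omega) (by omega) (hpair.1) hz (c := μ u - 1) (Or.inr ⟨by omega, by omega⟩)
    exact hpair.2.2 s' hs1 (by omega) hs3
  -- coverage
  have hcover : ∀ i u v, u < v → v < nL → idx u ≤ i → i < idx v →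
      ∃ w, u ≤ w ∧ w + 1 ≤ v ∧ idx w ≤ i ∧ i < idx (w + 1) := by
    intro i u v huv hv h1 h2
    set S : Finset ℕ := (Finset.Ico u v).filter (fun w => idx w ≤ i) with hS
    have huS : u ∈ S := by
      simp only [hS, Finset.mem_filter, Finset.mem_Ico]
      exact ⟨⟨le_refl u, huv⟩, h1⟩
    have hSne : S.Nonempty := ⟨u, huS⟩
    have hwS := S.max'_mem hSne
    set w := S.max' hSne with hwd
    simp only [hS, Finset.mem_filter, Finset.mem_Ico] at hwS
    refine ⟨w, hwS.1.1, by omega, hwS.2, ?_⟩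
    rcases eq_or_lt_of_le (by omega : w + 1 ≤ v) with he | hlt
    · rw [he]; exact h2
    · by_contra hc
      push_neg at hc
      have : w + 1 ∈ S := by
        simp only [hS, Finset.mem_filter, Finset.mem_Ico]
        exact ⟨⟨by omega, hlt⟩, hc⟩
      have := S.le_max' (w + 1) this
      omega
  -- level lower bound via walk
  have hlb : ∀ i z, lev i = some z → ∃ u, u < nL ∧ μ u ≤ z := by
    intro i z hz
    have hip : i ≤ p + 1 := by
      by_contra h
      rw [hG.2.1 i (by omega)] at hz
      simp at hz
    rcases eq_or_lt_of_le hip with he | hlt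
    · refine ⟨nL - 1, by omega, ?_⟩
      rw [he, hwv] at hz
      have := Option.some_injective _ hz
      omega
    · obtain ⟨w, hw0, hw1, hw2, hw3⟩ := hcover i 0 (nL - 1) (by omega) (by omega)
        (by rw [hidx0]; omega) (by rw [hidxlast]; omega)
      have hwn : w + 1 < nL := by omega
      rcases eq_or_lt_of_le hw2 with he | hlt'
      · refine ⟨w, by omega, ?_⟩
        have h5 := hμ w (by omega)
        rw [he, hz] at h5
        have := Option.some_injective _ h5
        omega
      · rcases hsec' w hwn with h | h | h
        · rw [hposint w hwn h i hlt' hw3] at hz; simp at hz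
        · rw [hnegint w hwn h i hlt' hw3] at hz; simp at hz
        · exact ⟨w, by omega, hstabint w hwn h i z hlt' hw3 hz⟩
  -- Lemma C : after a positive section, levels stay strictly above
  have hC : ∀ u v, u + 1 < nL → DirectedPos lev p (idx u) (idx (u+1)) →
      u < v → v < nL → μ u < μ v := by
    intro u v hu hP huv hv
    by_contra hle
    push_neg at hle
    set S : Finset ℕ := (Finset.Icc (u+1) v).filter (fun w => μ w ≤ μ u) with hS
    have hvS : v ∈ S := by
      simp only [hS, Finset.mem_filter, Finset.mem_Icc]
      exact ⟨⟨by omega, le_refl v⟩, hle⟩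
    have hSne : S.Nonempty := ⟨v, hvS⟩
    have hv0S := S.min'_mem hSne
    set v0 := S.min' hSne with hv0d
    simp only [hS, Finset.mem_filter, Finset.mem_Icc] at hv0S
    have hv0n : v0 < nL := by omega
    have hbet : ∀ w, u < w → w < v0 → μ u + 1 ≤ μ w := by
      intro w h1 h2
      by_contra hc
      push_neg at hc
      have : w ∈ S := by
        simp only [hS, Finset.mem_filter, Finset.mem_Icc]
        exact ⟨⟨by omega, by omega⟩, by omega⟩
      have := S.min'_le w this
      omega
    have hne1 : v0 ≠ u + 1 := by
      intro he
      have := hPosv u hu hP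
      rw [he] at hv0S
      omega
    have hu2 : u + 2 ≤ v0 := by omega
    have hprev : μ u + 1 ≤ μ (v0 - 1) := hbet (v0 - 1) (by omega) (by omega)
    have hv0val : μ v0 = μ u := by
      have hst := hstep3 (v0 - 1) (by omega)
      rw [(by omega : v0 - 1 + 1 = v0)] at hst
      omega
    have hpair : IsStablePair lev (μ u) (idx u) (idx v0) := by
      refine ⟨hμ u (by omega), by rw [hμ v0 hv0n, hv0val], ?_⟩
      intro s hs1 hs2 hs
      obtain ⟨w, hw0, hw1, hw2, hw3⟩ := hcover s u v0 (by omega) hv0n hs1 hs2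
      have hwn : w + 1 < nL := by omega
      have hwge : μ u ≤ μ w := by
        rcases eq_or_lt_of_le hw0 with he | hlt
        · rw [← he]
        · exact le_trans (by omega) (hbet w hlt (by omega))
      rcases eq_or_lt_of_le hw2 with he | hlt'
      · have h5 := hμ w (by omega)
        rw [he, hs] at h5
        have := Option.some_injective _ h5
        omega
      · rcases hsec' w hwn with h | h | h
        · rw [hposint w hwn h s hlt' hw3] at hs; simp at hs
        · rw [hnegint w hwn h s hlt' hw3] at hs; simp at hs
        · have := hstabint w hwn h s (μ u - 1) hlt' hw3 hs
          omega
    have hstable : IsStable lev p (idx u) :=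
      ⟨μ u, idx u, idx v0, le_refl _, hmono u v0 (by omega) hv0n, hidxle v0 hv0n, hpair⟩
    obtain ⟨m', _, _, hcond⟩ := hP
    exact (hcond (idx u) (le_refl _) (hmono u (u+1) (by omega) hu)).2.2 hstable
  -- characterization of sections by step values
  have hPiff : ∀ u, u + 1 < nL →
      (DirectedPos lev p (idx u) (idx (u+1)) ↔ μ (u+1) = μ u + 1) := by
    intro u hu
    constructor
    · exact hPosv u hu
    · intro h
      rcases hsec' u hu with hh | hh | hh
      · exact hh
      · have := hNegv u hu hh; omega
      · have := hStabv u hu hh; omega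
  have hNiff : ∀ u, u + 1 < nL →
      (DirectedNeg lev p (idx u) (idx (u+1)) ↔ μ (u+1) = μ u - 1) := by
    intro u hu
    constructor
    · exact hNegv u hu
    · intro h
      rcases hsec' u hu with hh | hh | hh
      · have := hPosv u hu hh; omega
      · exact hh
      · have := hStabv u hu hh; omega
  -- the walk counting
  set A : Finset ℕ := (Finset.range (nL - 1)).filter (fun u => μ (u+1) = μ u + 1)
    with hA
  set B : Finset ℕ := (Finset.range (nL - 1)).filter (fun u => μ (u+1) = μ u - 1)
    with hB
  have hWne : ∀ k : ℕ, ((Finset.range (k+1)).image μ).Nonempty :=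
    fun k => ⟨μ 0, Finset.mem_image_of_mem μ (by simp)⟩
  set Wmin : ℕ → ℤ := fun k => ((Finset.range (k+1)).image μ).min' (hWne k) with hWd
  have hwmin_le : ∀ k v, v ≤ k → Wmin k ≤ μ v := by
    intro k v hv
    apply Finset.min'_le
    exact Finset.mem_image_of_mem μ (Finset.mem_range.mpr (by omega))
  have hwmin_mem : ∀ k, ∃ v, v ≤ k ∧ Wmin k = μ v := by
    intro k
    obtain ⟨v, hv, he⟩ := Finset.mem_image.mp (Finset.min'_mem _ (hWne k))
    have hv' := Finset.mem_range.mp hv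
    exact ⟨v, by omega, he.symm⟩
  have hWsucc : ∀ k, Wmin (k+1) = min (Wmin k) (μ (k+1)) := by
    intro k
    refine le_antisymm (le_min ?_ (hwmin_le (k+1) (k+1) (le_refl _))) ?_
    · obtain ⟨v, hv, he⟩ := hwmin_mem k
      rw [he]
      exact hwmin_le (k+1) v (by omega)
    · obtain ⟨v, hv, he⟩ := hwmin_mem (k+1)
      rw [he]
      rcases Nat.lt_or_ge v (k+1) with h | h
      · exact le_trans (min_le_left _ _) (hwmin_le k v (by omega))
      · have hv2 : v = k + 1 := by omega
        rw [hv2]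
        exact min_le_right _ _
  have hwalk : ∀ k, k ≤ nL - 1 →
      ((((Finset.range k).filter (fun u => μ (u+1) = μ u - 1)).card : ℤ) = -(Wmin k)) ∧
      ((((Finset.range k).filter (fun u => μ (u+1) = μ u + 1)).card : ℤ) = μ k - Wmin k) := by
    intro k
    induction k with
    | zero =>
      intro _
      have hW0 : Wmin 0 = μ 0 := by
        refine le_antisymm (hwmin_le 0 0 (le_refl _)) ?_
        obtain ⟨v, hv, he⟩ := hwmin_mem 0
        have hv0 : v = 0 := by omega
        rw [he, hv0]
      simp [hW0, hμ0]
    | succ k ih =>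
      intro hk
      have hkn : k + 1 < nL := by omega
      obtain ⟨ih1, ih2⟩ := ih (by omega)
      have hWle : Wmin k ≤ μ k := hwmin_le k k (le_refl k)
      have hknR : k ∉ Finset.range k := by simp
      have cardneg : ∀ (P : ℕ → Prop) [DecidablePred P],
          ((Finset.range (k+1)).filter P).card =
          (if P k then 1 else 0) + ((Finset.range k).filter P).card := by
        intro P _
        rw [Finset.range_add_one, Finset.filter_insert]
        split
        · rw [Finset.card_insert_of_notMem (fun h => hknR (Finset.mem_filter.mp h).1)]
          omega
        · omega
      rcases hstep3 k hkn with hv | hv | hv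
      · -- positive step
        have hW : Wmin (k+1) = Wmin k := by
          rw [hWsucc k, hv]
          omega
        rw [cardneg, cardneg, hW, if_neg (by omega), if_pos hv]
        constructor
        · push_cast; omega
        · push_cast; omega
      · -- negative step
        have hall : ∀ v, v ≤ k → μ k ≤ μ v := by
          by_contra hcon
          push_neg at hcon
          obtain ⟨v, hvk, hvlt⟩ := hcon
          set S : Finset ℕ := (Finset.range (k+1)).filter (fun w => μ w < μ k) with hS
          have hvS : v ∈ S := by
            simp only [hS, Finset.mem_filter, Finset.mem_range]
            exact ⟨by omega, hvlt⟩
          have hSne : S.Nonempty := ⟨v, hvS⟩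
          have hv0S := S.max'_mem hSne
          set v0 := S.max' hSne with hv0d
          simp only [hS, Finset.mem_filter, Finset.mem_range] at hv0S
          have hv0k : v0 < k := by
            rcases eq_or_lt_of_le (by omega : v0 ≤ k) with he | hlt
            · rw [he] at hv0S; omega
            · exact hlt
          have hnext : μ k ≤ μ (v0 + 1) := by
            by_contra hc
            push_neg at hc
            have : v0 + 1 ∈ S := by
              simp only [hS, Finset.mem_filter, Finset.mem_range]
              exact ⟨by omega, hc⟩
            have := S.le_max' (v0 + 1) this
            omega
          have hv0n : v0 + 1 < nL := by omega
          have hstv0 := hstep3 v0 hv0n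
          have hval1 : μ (v0 + 1) = μ v0 + 1 := by omega
          have hval2 : μ v0 = μ k - 1 := by omega
          have hPv0 : DirectedPos lev p (idx v0) (idx (v0+1)) := (hPiff v0 hv0n).mpr hval1
          have := hC v0 (k+1) hv0n hPv0 (by omega) (by omega)
          omega
        have hWk : Wmin k = μ k := by
          refine le_antisymm hWle ?_
          obtain ⟨v, hv, he⟩ := hwmin_mem k
          rw [he]
          exact hall v hv
        have hW : Wmin (k+1) = μ k - 1 := by
          rw [hWsucc k, hv, hWk]
          omega
        rw [cardneg, cardneg, hW, if_pos hv, if_neg (by omega)]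
        constructor
        · push_cast; omega
        · push_cast; omega
      · -- stable step
        have hW : Wmin (k+1) = Wmin k := by
          rw [hWsucc k, hv]
          omega
        rw [cardneg, cardneg, hW, if_neg (by omega), if_neg (by omega)]
        constructor
        · push_cast; omega
        · push_cast; omega
  obtain ⟨hwalkN, hwalkP⟩ := hwalk (nL - 1) (le_refl _)
  have hAw : ((A.card : ℤ)) = μ (nL - 1) - Wmin (nL - 1) := hwalkP
  have hBw : ((B.card : ℤ)) = -(Wmin (nL - 1)) := hwalkN
  -- identify m with the walk minimum
  have hmW : m = Wmin (nL - 1) := by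
    refine le_antisymm ?_ ?_
    · obtain ⟨v, hv, he⟩ := hwmin_mem (nL - 1)
      rw [he]
      exact hm.2 (μ v) ⟨idx v, hidxle v (by omega), hμ v (by omega)⟩
    · obtain ⟨i, hip, hi⟩ := hm.1
      obtain ⟨u, hu, hle⟩ := hlb i m hi
      exact le_trans (hwmin_le (nL - 1) u (by omega)) hle
  -- zip membership
  have hidxg : ∀ u, (h : u < nL) → idx u = L[u]'h := by
    intro u h
    rw [hidxe u h]
    simp [List.get_eq_getElem]
  have hlen : (L.zip L.tail).length = nL - 1 := by
    rw [List.length_zip, List.length_tail]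
    omega
  have hget : ∀ u, (h : u < nL - 1) →
      (L.zip L.tail)[u]'(by rw [hlen]; exact h) = (idx u, idx (u+1)) := by
    intro u h
    have h1 : u < L.length := by omega
    have h2 : u < L.tail.length := by rw [List.length_tail]; omega
    rw [List.getElem_zip]
    rw [hidxg u (by omega), hidxg (u+1) (by omega)]
    rw [List.getElem_tail]
  have hzip : ∀ q : ℕ × ℕ, q ∈ L.zip L.tail ↔
      ∃ u, u < nL - 1 ∧ q = (idx u, idx (u+1)) := by
    intro q
    constructor
    · intro hq
      obtain ⟨u, hu, he⟩ := List.mem_iff_getElem.mp hq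
      have hu' : u < nL - 1 := by rw [hlen] at hu; exact hu
      refine ⟨u, hu', ?_⟩
      rw [← he, hget u hu']
    · rintro ⟨u, hu, rfl⟩
      rw [← hget u hu]
      exact List.getElem_mem _
  -- sets as finsets
  have hinj : ∀ (C : Finset ℕ), C ⊆ Finset.range (nL - 1) →
      Set.InjOn (fun u => (idx u, idx (u+1))) C := by
    intro C hC x hx y hy he
    have hx' := Finset.mem_range.mp (hC hx)
    have hy' := Finset.mem_range.mp (hC hy)
    simp only [Prod.mk.injEq] at he
    by_contra hne
    rcases Nat.lt_or_ge x y with h | h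
    · have := hmono x y h (by omega)
      omega
    · have := hmono y x (by omega) (by omega)
      omega
  have hsetP : {q : ℕ × ℕ | q ∈ L.zip L.tail ∧ DirectedPos lev p q.1 q.2} =
      ↑(A.image (fun u => (idx u, idx (u+1)))) := by
    ext q
    simp only [Set.mem_setOf_eq, Finset.coe_image, Set.mem_image, Finset.mem_coe,
      hA, Finset.mem_filter, Finset.mem_range]
    constructor
    · rintro ⟨hq, hP⟩
      obtain ⟨u, hu, rfl⟩ := (hzip q).mp hq
      exact ⟨u, ⟨hu, (hPiff u (by omega)).mp hP⟩, rfl⟩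
    · rintro ⟨u, ⟨hu, he⟩, rfl⟩
      exact ⟨(hzip _).mpr ⟨u, hu, rfl⟩, (hPiff u (by omega)).mpr he⟩
  have hsetN : {q : ℕ × ℕ | q ∈ L.zip L.tail ∧ DirectedNeg lev p q.1 q.2} =
      ↑(B.image (fun u => (idx u, idx (u+1)))) := by
    ext q
    simp only [Set.mem_setOf_eq, Finset.coe_image, Set.mem_image, Finset.mem_coe,
      hB, Finset.mem_filter, Finset.mem_range]
    constructor
    · rintro ⟨hq, hP⟩
      obtain ⟨u, hu, rfl⟩ := (hzip q).mp hq
      exact ⟨u, ⟨hu, (hNiff u (by omega)).mp hP⟩, rfl⟩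
    · rintro ⟨u, ⟨hu, he⟩, rfl⟩
      exact ⟨(hzip _).mpr ⟨u, hu, rfl⟩, (hNiff u (by omega)).mpr he⟩
  have hcardP : Nat.card {q : ℕ × ℕ // q ∈ L.zip L.tail ∧ DirectedPos lev p q.1 q.2}
      = A.card := by
    have h1 := Nat.card_coe_set_eq {q : ℕ × ℕ | q ∈ L.zip L.tail ∧ DirectedPos lev p q.1 q.2}
    refine h1.trans ?_
    rw [hsetP, Set.ncard_coe_finset]
    exact Finset.card_image_of_injOn (hinj A (Finset.filter_subset _ _))
  have hcardN : Nat.card {q : ℕ × ℕ // q ∈ L.zip L.tail ∧ DirectedNeg lev p q.1 q.2}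
      = B.card := by
    have h1 := Nat.card_coe_set_eq {q : ℕ × ℕ | q ∈ L.zip L.tail ∧ DirectedNeg lev p q.1 q.2}
    refine h1.trans ?_
    rw [hsetN, Set.ncard_coe_finset]
    exact Finset.card_image_of_injOn (hinj B (Finset.filter_subset _ _))
  refine ⟨μ (nL - 1), hwv, ?_, ?_, ?_, ?_⟩
  · constructor
    · rintro ⟨q, hq, hP⟩
      obtain ⟨u, hu, rfl⟩ := (hzip q).mp hq
      have huA : u ∈ A := by
        simp only [hA, Finset.mem_filter, Finset.mem_range]
        exact ⟨hu, (hPiff u (by omega)).mp hP⟩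
      have : 0 < A.card := Finset.card_pos.mpr ⟨u, huA⟩
      rw [hmW]
      omega
    · intro h
      rw [hmW] at h
      have : 0 < A.card := by omega
      obtain ⟨u, huA⟩ := Finset.card_pos.mp this
      simp only [hA, Finset.mem_filter, Finset.mem_range] at huA
      exact ⟨(idx u, idx (u+1)), (hzip _).mpr ⟨u, huA.1, rfl⟩,
        (hPiff u (by omega)).mpr huA.2⟩
  · constructor
    · rintro ⟨q, hq, hP⟩
      obtain ⟨u, hu, rfl⟩ := (hzip q).mp hq
      have huB : u ∈ B := by
        simp only [hB, Finset.mem_filter, Finset.mem_range]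
        exact ⟨hu, (hNiff u (by omega)).mp hP⟩
      have : 0 < B.card := Finset.card_pos.mpr ⟨u, huB⟩
      rw [hmW]
      omega
    · intro h
      rw [hmW] at h
      have : 0 < B.card := by omega
      obtain ⟨u, huB⟩ := Finset.card_pos.mp this
      simp only [hB, Finset.mem_filter, Finset.mem_range] at huB
      exact ⟨(idx u, idx (u+1)), (hzip _).mpr ⟨u, huB.1, rfl⟩,
        (hNiff u (by omega)).mpr huB.2⟩
  · rw [hcardP, hmW]
    omega
  · rw [hcardN, hmW]
    omega

/-- For an LS-gallery `δ` and a simple root `α`: `f_α` is defined on `δ`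
iff `δ` has an α-directed section, `e_α` is defined iff `δ` has a `(−α)`-directed
section; moreover `φ_α(δ)`, the maximal number of applications of `f_α`, equals the
number of α-directed sections of the partition, and `ε_α(δ)` equals the number of
`(−α)`-directed sections. -/
theorem root_operators_and_directed_sections
    (lev : ℕ → Option ℤ) (p : ℕ)
    (hlev0 : lev 0 = some 0)
    (hjunk : ∀ i, p + 1 < i → lev i = none)
    (hstep : ∀ a b ma mb, a < b → b ≤ p + 1 → lev a = some ma → lev b = some mb →
      (∀ s, a < s → s < b → lev s = none) → mb = ma + 1 ∨ mb = ma - 1 ∨ mb = ma)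
    (L : List ℕ)
    (hchain : L.Chain' (· < ·)) (hhead : L.head? = some 0)
    (hlast : L.getLast? = some (p + 1))
    (hsec : L.Chain' (fun a b =>
      DirectedPos lev p a b ∨ DirectedNeg lev p a b ∨ StableSection lev p a b)) :
    ((∃ lev', FStep p lev lev') ↔ ∃ q ∈ L.zip L.tail, DirectedPos lev p q.1 q.2) ∧
    ((∃ lev', EStep p lev lev') ↔ ∃ q ∈ L.zip L.tail, DirectedNeg lev p q.1 q.2) ∧
    (∀ n : ℕ, (StepChain (FStep p) lev n ∧ ¬ StepChain (FStep p) lev (n + 1)) ↔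
      n = Nat.card {q : ℕ × ℕ // q ∈ L.zip L.tail ∧ DirectedPos lev p q.1 q.2}) ∧
    (∀ n : ℕ, (StepChain (EStep p) lev n ∧ ¬ StepChain (EStep p) lev (n + 1)) ↔
      n = Nat.card {q : ℕ × ℕ // q ∈ L.zip L.tail ∧ DirectedNeg lev p q.1 q.2}) := by
  have hG : Gal p lev := ⟨hlev0, hjunk, hstep⟩
  obtain ⟨m, hm⟩ := minLevel_exists hG
  obtain ⟨wv, hwv, hiffP, hiffN, hcP, hcN⟩ := walk_main hG L hchain hhead hlast hsec hm
  refine ⟨?_, ?_, ?_, ?_⟩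
  · rw [hiffP]
    constructor
    · rintro ⟨lev', hF⟩
      obtain ⟨m0, wv0, hm0, hwv0, hge, _⟩ := fstep_effect hG hF
      have e1 : m0 = m := minLevel_unique hm0 hm
      have e2 : wv0 = wv := by rw [hwv0] at hwv; exact Option.some_injective _ hwv
      omega
    · intro h
      exact fstep_exists hG hm hwv h
  · rw [hiffN]
    constructor
    · rintro ⟨lev', hE⟩
      obtain ⟨m0, hm0, hneg, _⟩ := estep_effect hG hE
      have e1 : m0 = m := minLevel_unique hm0 hm
      omega
    · intro h
      exact estep_exists hG hm h
  · intro n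
    rw [fchain_iff n lev m wv hG hm hwv, fchain_iff (n+1) lev m wv hG hm hwv]
    push_cast
    omega
  · intro n
    rw [echain_iff n lev m hG hm, echain_iff (n+1) lev m hG hm]
    push_cast
    omega
end
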